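/- arXiv:2509.19961 — 5 statements merged into one kernel-verified Lean document; each statement's English description precedes it below -/
import Mathlib

section
/- X^∞ is dense in [0,1], and (X^∞, <) with the order induced from ℝ is order-isomorphic to (ℚ, <). -/
/-- The set `X = { 1/i : i ≥ 3 } ∪ { 1 - 1/i : i ≥ 3 } ⊂ (0,1)`. -/
def Xset : Set ℝ :=
  {x | ∃ i : ℕ, 3 ≤ i ∧ (x = 1 / (i : ℝ) ∨ x = 1 - 1 / (i : ℝ))}

/-- The order preserving bijection `h : ℤ → X`. -/
noncomputable def hFun (n : ℤ) : ℝ :=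
  if 0 < n then 1 - 1 / (2 + (n : ℝ)) else 1 / (3 + |(n : ℝ)|)

/-- `gSingle n : [0,1] → I_n = [h n, h (n+1)]` is the unique increasing affine bijection. -/
noncomputable def gSingle (n : ℤ) (x : ℝ) : ℝ :=
  (hFun (n + 1) - hFun n) * x + hFun n

/-- `gSeq (n₁, …, n_k)` is the unique increasing affine bijection from `[0,1]` onto the
interval `I_{(n₁,…,n_k)}`; it is the composition `g_{n₁} ∘ ⋯ ∘ g_{n_k}` read correctly,
using `I_{(n₁,…,n_{k+1})} = g_{(n₁,…,n_k)}(I_{n_{k+1}})`. For the empty sequence it is the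
identity of `[0,1]`. -/
noncomputable def gSeq : List ℤ → ℝ → ℝ
  | [] => id
  | n :: L => gSingle n ∘ gSeq L

/-- `X^∞ = ⋃_{k ≥ 0} X⁽ᵏ⁾`, where `X⁽⁰⁾ = X` and
`X⁽ᵏ⁾ = ⋃_{(n₁,…,n_k) ∈ ℤᵏ} g_{(n₁,…,n_k)}(X)`. -/
def Xinf : Set ℝ := ⋃ L : List ℤ, gSeq L '' Xset

/-!
The points `h n` cut `(0,1)` into the intervals `I_n`, each of length at most `1/3`, and `g_n`
maps `(0,1)` onto the interior of `I_n`, maps `X^∞` into itself and scales distances by `|I_n|`.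
A point of `(0,1)` is therefore either some `h n ∈ X` or the `g_n`-image of a point of `(0,1)`,
and induction gives points of `X^∞` within `3^{-k}` of it. So `X^∞ ⊆ (0,1)` has closure `[0,1]`;
being countable, it is then a countable dense linear order without endpoints, hence isomorphic
to `ℚ` by Cantor's back-and-forth theorem.
-/

open Set

lemma hFun_of_pos {n : ℤ} (hn : 0 < n) : hFun n = 1 - 1 / (2 + n) := if_pos hn

lemma hFun_of_nonpos {n : ℤ} (hn : n ≤ 0) : hFun n = 1 / (3 - n) := by
  rw [hFun, if_neg hn.not_gt, abs_of_nonpos (by exact_mod_cast hn), sub_eq_add_neg]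

lemma Xset_subset_Ioo : Xset ⊆ Ioo 0 1 := by
  rintro x ⟨i, hi, rfl | rfl⟩ <;>
  · have hi : (3 : ℝ) ≤ i := by exact_mod_cast hi
    have hinv : 1 / (i : ℝ) ≤ 1 / 3 := one_div_le_one_div_of_le (by norm_num) hi
    have : 0 < 1 / (i : ℝ) := by positivity
    constructor <;> linarith

lemma hFun_mem_Xset (n : ℤ) : hFun n ∈ Xset := by
  rcases lt_or_ge 0 n with hn | hn
  · refine ⟨(2 + n).toNat, by omega, Or.inr ?_⟩
    rw [hFun_of_pos hn, ← Int.cast_natCast, Int.toNat_of_nonneg (by omega)]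
    push_cast; rfl
  · refine ⟨(3 - n).toNat, by omega, Or.inl ?_⟩
    rw [hFun_of_nonpos hn, ← Int.cast_natCast, Int.toNat_of_nonneg (by omega)]
    push_cast; rfl

lemma hFun_mem_Ioo (n : ℤ) : hFun n ∈ Ioo 0 1 := Xset_subset_Ioo (hFun_mem_Xset n)

lemma hFun_succ_sub_mem_Ioc (n : ℤ) : hFun (n + 1) - hFun n ∈ Ioc 0 (1 / 3) := by
  rcases lt_trichotomy n 0 with hn | rfl | hn
  · have hn' : (n : ℝ) ≤ -1 := by exact_mod_cast (by omega : n ≤ -1)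
    rw [hFun_of_nonpos (by omega), hFun_of_nonpos (by omega)]
    have : 1 / (3 - ((n + 1 : ℤ) : ℝ)) - 1 / (3 - n) = 1 / ((2 - n) * (3 - n)) := by
      rw [div_sub_div _ _ (by push_cast; linarith) (by linarith)]
      push_cast; ring
    rw [this]
    exact ⟨one_div_pos.2 (by nlinarith), one_div_le_one_div_of_le (by norm_num) (by nlinarith)⟩
  · norm_num [hFun]
  · have hn' : (1 : ℝ) ≤ n := by exact_mod_cast hn
    rw [hFun_of_pos (by omega), hFun_of_pos (by omega)]
    have : 1 - 1 / (2 + ((n + 1 : ℤ) : ℝ)) - (1 - 1 / (2 + n)) = 1 / ((2 + n) * (3 + n)) := by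
      rw [sub_sub_sub_cancel_left, div_sub_div _ _ (by linarith) (by push_cast; linarith)]
      push_cast; ring
    rw [this]
    exact ⟨one_div_pos.2 (by nlinarith), one_div_le_one_div_of_le (by norm_num) (by nlinarith)⟩

lemma hFun_lt_succ (n : ℤ) : hFun n < hFun (n + 1) := sub_pos.1 (hFun_succ_sub_mem_Ioc n).1

lemma hFun_strictMono : StrictMono hFun := strictMono_int_of_lt_succ hFun_lt_succ

lemma exists_hFun_le {x : ℝ} (hx : 0 < x) : ∃ n, hFun n ≤ x := by
  obtain ⟨m, hm⟩ := exists_nat_one_div_lt hx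
  refine ⟨-m, ?_⟩
  rw [hFun_of_nonpos (by omega)]
  push_cast
  calc 1 / (3 - -(m : ℝ)) ≤ 1 / (m + 1) := by gcongr; linarith
    _ ≤ x := hm.le

lemma exists_lt_hFun {x : ℝ} (hx : x < 1) : ∃ n, x < hFun n := by
  obtain ⟨m, hm⟩ := exists_nat_one_div_lt (sub_pos.2 hx)
  refine ⟨m + 1, ?_⟩
  rw [hFun_of_pos (by omega)]
  push_cast
  have : 1 / (2 + ((m : ℝ) + 1)) ≤ 1 / (m + 1) :=
    one_div_le_one_div_of_le (by positivity) (by linarith)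
  linarith

lemma Int.exists_le_lt_succ_of_monotone {α : Type*} [LinearOrder α] {f : ℤ → α}
    (hf : Monotone f) {x : α} (hlo : ∃ n, f n ≤ x) (hhi : ∃ n, x < f n) :
    ∃ n, f n ≤ x ∧ x < f (n + 1) := by
  obtain ⟨m, hm⟩ := hhi
  have hbdd : ∃ b, ∀ n, f n ≤ x → n ≤ b :=
    ⟨m, fun n hn => le_of_not_gt fun h => (hm.trans_le (hf h.le)).not_ge hn⟩
  obtain ⟨n, hn, hmax⟩ := Int.exists_greatest_of_bdd hbdd hlo
  exact ⟨n, hn, lt_of_not_ge fun h => (hmax (n + 1) h).not_gt (lt_add_one n)⟩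

lemma image_gSingle_Ioo (n : ℤ) : gSingle n '' Ioo 0 1 = Ioo (hFun n) (hFun (n + 1)) := by
  change ((hFun (n + 1) - hFun n) * · + hFun n) '' _ = _
  rw [image_affine_Ioo (sub_pos.2 (hFun_lt_succ n))]
  simp

lemma dist_gSingle (n : ℤ) (x y : ℝ) :
    dist (gSingle n x) (gSingle n y) = (hFun (n + 1) - hFun n) * dist x y := by
  rw [Real.dist_eq, Real.dist_eq, gSingle, gSingle, ← abs_of_pos (sub_pos.2 (hFun_lt_succ n)),
    ← abs_mul, abs_of_pos (sub_pos.2 (hFun_lt_succ n))]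
  ring_nf

lemma gSingle_mapsTo_Ioo (n : ℤ) : MapsTo (gSingle n) (Ioo 0 1) (Ioo 0 1) := by
  rw [mapsTo_iff_image_subset, image_gSingle_Ioo]
  exact Ioo_subset_Ioo (hFun_mem_Ioo n).1.le (hFun_mem_Ioo (n + 1)).2.le

lemma Xinf_subset_Ioo : Xinf ⊆ Ioo 0 1 := by
  refine iUnion_subset fun L => ?_
  rintro _ ⟨x, hx, rfl⟩
  induction L with
  | nil => exact Xset_subset_Ioo hx
  | cons n L ih => exact gSingle_mapsTo_Ioo n ih

lemma Xset_subset_Xinf : Xset ⊆ Xinf := fun x hx => mem_iUnion.2 ⟨[], x, hx, rfl⟩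

lemma gSingle_mem_Xinf (n : ℤ) {x : ℝ} (hx : x ∈ Xinf) : gSingle n x ∈ Xinf := by
  obtain ⟨L, y, hy, rfl⟩ := mem_iUnion.1 hx
  exact mem_iUnion.2 ⟨n :: L, y, hy, rfl⟩

lemma exists_mem_Xinf_dist_le (k : ℕ) {x : ℝ} (hx : x ∈ Ioo 0 1) :
    ∃ p ∈ Xinf, dist x p ≤ (1 / 3) ^ k := by
  induction k generalizing x with
  | zero =>
    refine ⟨hFun 0, Xset_subset_Xinf (hFun_mem_Xset 0), ?_⟩
    have := hFun_mem_Ioo 0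
    rw [Real.dist_eq, pow_zero, abs_le]
    constructor <;> linarith [hx.1, hx.2, this.1, this.2]
  | succ k ih =>
    obtain ⟨n, hnx, hxn⟩ := Int.exists_le_lt_succ_of_monotone hFun_strictMono.monotone
      (exists_hFun_le hx.1) (exists_lt_hFun hx.2)
    rcases hnx.eq_or_lt with rfl | hnx
    · exact ⟨hFun n, Xset_subset_Xinf (hFun_mem_Xset n), by simp⟩
    obtain ⟨y, hy, rfl⟩ : x ∈ gSingle n '' Ioo 0 1 := by
      rw [image_gSingle_Ioo]; exact ⟨hnx, hxn⟩
    obtain ⟨p, hp, hyp⟩ := ih hy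
    refine ⟨gSingle n p, gSingle_mem_Xinf n hp, ?_⟩
    rw [dist_gSingle, pow_succ']
    exact mul_le_mul (hFun_succ_sub_mem_Ioc n).2 hyp dist_nonneg (by norm_num)

lemma Ioo_subset_closure_Xinf : Ioo 0 1 ⊆ closure Xinf := fun x hx =>
  Metric.mem_closure_iff.2 fun ε hε => by
    obtain ⟨k, hk⟩ := exists_pow_lt_of_lt_one hε (by norm_num : (1 / 3 : ℝ) < 1)
    obtain ⟨p, hp, hxp⟩ := exists_mem_Xinf_dist_le k hx
    exact ⟨p, hp, hxp.trans_lt hk⟩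

lemma closure_Xinf : closure Xinf = Icc 0 1 := by
  refine (closure_minimal (Xinf_subset_Ioo.trans Ioo_subset_Icc_self) isClosed_Icc).antisymm ?_
  rw [← closure_Ioo zero_ne_one]
  exact closure_minimal Ioo_subset_closure_Xinf isClosed_closure

lemma Xinf_countable : Xinf.Countable := by
  refine countable_iUnion fun L => Countable.image ?_ _
  refine ((countable_range fun i : ℕ => 1 / (i : ℝ)).union
    (countable_range fun i : ℕ => 1 - 1 / (i : ℝ))).mono ?_
  rintro x ⟨i, -, rfl | rfl⟩
  exacts [Or.inl ⟨i, rfl⟩, Or.inr ⟨i, rfl⟩]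

section OrderIsoRat

variable {α : Type*} [LinearOrder α] [TopologicalSpace α] [OrderTopology α] [DenselyOrdered α]
  {S : Set α}

lemma inter_Ioo_nonempty_of_Ioo_subset_closure {x y : α} (hxy : x < y)
    (h : Ioo x y ⊆ closure S) : (S ∩ Ioo x y).Nonempty := by
  obtain ⟨z, hz⟩ := nonempty_Ioo.2 hxy
  exact (closure_inter_open_nonempty_iff isOpen_Ioo).1 ⟨z, h hz, hz⟩

theorem nonempty_orderIso_rat_of_subset_Ioo_subset_closure {a b : α} (hab : a < b)
    (hS : S.Countable) (hSab : S ⊆ Ioo a b) (hdense : Ioo a b ⊆ closure S) :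
    Nonempty (S ≃o ℚ) := by
  have between {x y : α} (hax : a ≤ x) (hxy : x < y) (hyb : y ≤ b) : ∃ p ∈ S, x < p ∧ p < y :=
    inter_Ioo_nonempty_of_Ioo_subset_closure hxy ((Ioo_subset_Ioo hax hyb).trans hdense)
  have : Countable S := hS.to_subtype
  have : Nonempty S := (inter_Ioo_nonempty_of_Ioo_subset_closure hab hdense).mono
    inter_subset_left |>.to_subtype
  have : DenselyOrdered S := ⟨fun x y hxy => by
    obtain ⟨p, hp, hxp, hpy⟩ := between (hSab x.2).1.le hxy (hSab y.2).2.le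
    exact ⟨⟨p, hp⟩, hxp, hpy⟩⟩
  have : NoMinOrder S := ⟨fun x => by
    obtain ⟨p, hp, -, hpx⟩ := between le_rfl (hSab x.2).1 (hSab x.2).2.le
    exact ⟨⟨p, hp⟩, hpx⟩⟩
  have : NoMaxOrder S := ⟨fun x => by
    obtain ⟨p, hp, hxp, -⟩ := between (hSab x.2).1.le (hSab x.2).2 le_rfl
    exact ⟨⟨p, hp⟩, hxp⟩⟩
  exact Order.iso_of_countable_dense S ℚ

end OrderIsoRat

/-- `X^∞` is dense in `[0,1]`, and `(X^∞, <)` with the order induced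
from `ℝ` is order-isomorphic to `(ℚ, <)`. -/
theorem stmt2 :
    (∀ x ∈ Set.Icc (0 : ℝ) 1, x ∈ closure Xinf) ∧ Nonempty (↥Xinf ≃o ℚ) :=
  ⟨closure_Xinf.ge, nonempty_orderIso_rat_of_subset_Ioo_subset_closure one_pos
    Xinf_countable Xinf_subset_Ioo Ioo_subset_closure_Xinf⟩
end

section
/- There exists t₀ > 0 such that for every (m,n) ∈ ℤ² with m ≥ 1, n ≥ 0, and t_{(m,n)} ≥ t₀: the interior of R_{(m,n)} contains no point of ℤ² if and only if the pair (n, m) is a good lower approximation of the second kind of α or a good upper approximation of the second kind of α. -/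
/-!
In the coordinates `t = tcoord`, `s = scoord` along `(1, α)` and `(1, β)`, a lattice point `(k, l)`
has `(α - β) s = α k - l` and `k = t + s`, and the interior of `R_{(m,n)}` is the open box between
`0` and `(T, S) = (t_{(m,n)}, s_{(m,n)})`. Both conditions concern the lattice points with `s`
strictly between `0` and `S`: the box asks for `0 < t < T`, while `(n, m)` is a good approximation
(lower if `S > 0`, upper if `S < 0`) iff no such point has `0 < k ≤ m`, i.e. `-s < t ≤ T + S - s`.
The two regions differ only near the sides `t = 0` and `t = T`, which the central symmetry
`(k, l) ↦ (m - k, n - l)` exchanges, and once `T` is large a lattice point there can be traded for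
one in the other region. This needs only the irrationality of `α`, forced by the contracting
eigenvalue: for `S > 0` step `k` along a point with small `Int.fract (α k)`; for `S < 0` turn a
lower approximation `α q - p` into a better upper one through the multiple `⌊1 / (α q - p)⌋`.
-/

/-- `t_{(m,n)} = (n − βm)/(α − β)`, the coordinate of `(m,n)` along the direction `(1,α)`
in the basis `(1,α), (1,β)`. -/
noncomputable def tcoord (α β : ℝ) (m n : ℤ) : ℝ := ((n : ℝ) - β * m) / (α - β)

/-- `s_{(m,n)} = (αm − n)/(α − β)`, the coordinate of `(m,n)` along the direction `(1,β)`. -/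
noncomputable def scoord (α β : ℝ) (m n : ℤ) : ℝ := (α * m - (n : ℝ)) / (α - β)

/-- The parallelogram `R_{(m,n)}` with opposite vertices `(0,0)` and `(m,n)` whose sides are
parallel to `(1,α)` and `(1,β)`:
`{a·(1,α) + b·(1,β) : a between 0 and t_{(m,n)}, b between 0 and s_{(m,n)}}`. -/
def Rpar (α β : ℝ) (m n : ℤ) : Set (ℝ × ℝ) :=
  {p | ∃ a b : ℝ, a ∈ Set.uIcc 0 (tcoord α β m n) ∧ b ∈ Set.uIcc 0 (scoord α β m n) ∧
    p = (a + b, a * α + b * β)}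

/-- The interior of the parallelogram `R_{(m,n)}` contains no point of `ℤ²`. -/
def NoLatticeInterior (α β : ℝ) (m n : ℤ) : Prop :=
  ∀ p ∈ interior (Rpar α β m n), ¬ ∃ k l : ℤ, p = ((k : ℝ), (l : ℝ))

/-- `(p,q)` (with `q ≥ 1` and `p − qα < 0`) is a *good lower approximation of the second kind*
of `α`: `|p − qα| < |p′ − q′α|` for every `(p′,q′) ≠ (p,q)` with `1 ≤ q′ ≤ q` and
`p′ − q′α < 0`. -/
def GoodLower (α : ℝ) (p q : ℤ) : Prop :=
  1 ≤ q ∧ (p : ℝ) - q * α < 0 ∧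
    ∀ p' q' : ℤ, (p', q') ≠ (p, q) → 1 ≤ q' → q' ≤ q → (p' : ℝ) - q' * α < 0 →
      |(p : ℝ) - q * α| < |(p' : ℝ) - q' * α|

/-- `(p,q)` (with `q ≥ 1` and `p − qα > 0`) is a *good upper approximation of the second kind*
of `α`. -/
def GoodUpper (α : ℝ) (p q : ℤ) : Prop :=
  1 ≤ q ∧ 0 < (p : ℝ) - q * α ∧
    ∀ p' q' : ℤ, (p', q') ≠ (p, q) → 1 ≤ q' → q' ≤ q → 0 < (p' : ℝ) - q' * α →
      |(p : ℝ) - q * α| < |(p' : ℝ) - q' * α|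

open Set

lemma interior_uIcc {X : Type*} [LinearOrder X] [TopologicalSpace X] [OrderTopology X]
    [DenselyOrdered X] [NoMinOrder X] [NoMaxOrder X] (a b : X) :
    interior (uIcc a b) = uIoo a b :=
  interior_Icc

lemma exists_nat_mul_lt_one_fract_lt (y : ℝ) {δ X : ℝ} (hδ : 0 < δ) (hδX : δ < X) :
    ∃ j : ℕ, j * δ < 1 ∧ Int.fract (y + j * δ) < X := by
  rcases lt_or_ge (Int.fract y) X with hy | hy
  · exact ⟨0, by simp, by simpa using hy⟩
  -- the first `j` for which `y + j * δ` passes the integer `⌊y⌋ + 1` overshoots it by less than `δ`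
  set j := ⌈(1 - Int.fract y) / δ⌉₊
  have hj₁ : 1 - Int.fract y ≤ j * δ := (div_le_iff₀ hδ).1 (Nat.le_ceil _)
  have hj₂ : j * δ < 1 - Int.fract y + δ := by
    have := mul_lt_mul_of_pos_right
      (Nat.ceil_lt_add_one (div_nonneg (sub_nonneg.2 (Int.fract_lt_one y).le) hδ.le)) hδ
    rwa [add_mul, div_mul_cancel₀ _ hδ.ne', one_mul] at this
  have hfloor : ((⌊y⌋ + 1 : ℤ) : ℝ) ≤ ⌊y + j * δ⌋ := by
    exact_mod_cast Int.le_floor.2 (by push_cast; linarith [Int.floor_add_fract y])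
  refine ⟨j, by linarith, ?_⟩
  rw [← Int.self_sub_floor]
  push_cast at hfloor
  linarith [Int.floor_add_fract y]

section Irrational

variable {α : ℝ}

/-- If `α` were rational, iterating `A` on the integer points of the line `y = α x` would
shrink them towards the origin. -/
lemma irrational_of_eigenvector (A : Matrix (Fin 2) (Fin 2) ℤ) {lam : ℝ} (hlam0 : lam ≠ 0)
    (hlam1 : |lam| < 1) (h0 : (A 0 0 : ℝ) + A 0 1 * α = lam)
    (h1 : (A 1 0 : ℝ) + A 1 1 * α = lam * α) : Irrational α := by
  rintro ⟨q, rfl⟩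
  have step : ∀ k : ℤ, (∃ l : ℤ, (q : ℝ) * k = l) →
      ∃ k' : ℤ, (k' : ℝ) = lam * k ∧ ∃ l : ℤ, (q : ℝ) * k' = l := by
    rintro k ⟨l, hl⟩
    refine ⟨A 0 0 * k + A 0 1 * l, ?_, A 1 0 * k + A 1 1 * l, ?_⟩
    · push_cast
      rw [← hl, ← h0]
      ring
    · push_cast
      rw [← hl]
      linear_combination (q : ℝ) * k * h0 - (k : ℝ) * h1
  have iterate : ∀ N : ℕ, ∃ k : ℤ, (k : ℝ) = lam ^ N * q.den ∧ ∃ l : ℤ, (q : ℝ) * k = l := by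
    intro N
    induction N with
    | zero => exact ⟨q.den, by simp, q.num, by exact_mod_cast Rat.mul_den_eq_num q⟩
    | succ N ih =>
      obtain ⟨k, hk, hl⟩ := ih
      obtain ⟨k', hk', hl'⟩ := step k hl
      exact ⟨k', by rw [hk', hk]; ring, hl'⟩
  have hden : (0 : ℝ) < q.den := by exact_mod_cast q.den_pos
  obtain ⟨N, hN⟩ := exists_pow_lt_of_lt_one (inv_pos.2 hden) hlam1
  obtain ⟨k, hk, -⟩ := iterate N
  have hk0 : k ≠ 0 := by
    rintro rfl
    have : lam ^ N * q.den ≠ 0 := by positivity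
    exact this (by exact_mod_cast hk.symm)
  have hk1 : (1 : ℝ) ≤ |(k : ℝ)| := by exact_mod_cast Int.one_le_abs hk0
  rw [hk, abs_mul, abs_pow, abs_of_pos hden] at hk1
  have := mul_lt_mul_of_pos_right hN hden
  rw [inv_mul_cancel₀ hden.ne'] at this
  linarith

lemma Irrational.mul_intCast_ne_intCast (hα : Irrational α) {k : ℤ} (hk : k ≠ 0) (l : ℤ) :
    α * k ≠ l :=
  (hα.mul_intCast hk).ne_int l

/-- The witness is `(j p + 1, j q)` with `j = ⌊1 / (α q - p)⌋`. -/
lemma Irrational.exists_upper_of_lower (hα : Irrational α) {p q : ℤ} (hq : 1 ≤ q)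
    (h₀ : 0 < α * q - p) (h₁ : α * q - p < 1) :
    ∃ p' q' : ℤ, 1 ≤ q' ∧ q' * (α * q - p) ≤ q ∧ 0 < p' - α * q' ∧ p' - α * q' < α * q - p := by
  set w := α * q - p
  set j := ⌊1 / w⌋₊
  have hj₁ : 1 ≤ j := Nat.le_floor (by rw [Nat.cast_one, le_div_iff₀ h₀]; linarith)
  have hjw₁ : j * w ≤ 1 := (le_div_iff₀ h₀).1 (Nat.floor_le (by positivity))
  have hjw₂ : 1 - w < j * w := by
    have := mul_lt_mul_of_pos_right (Nat.lt_floor_add_one (1 / w)) h₀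
    rwa [add_mul, div_mul_cancel₀ _ h₀.ne', one_mul, ← sub_lt_iff_lt_add] at this
  have hjw : j * w < 1 := by
    refine hjw₁.lt_of_ne fun h => hα.mul_intCast_ne_intCast (k := j * q) (by positivity)
      (j * p + 1) ?_
    push_cast
    linear_combination h
  have hq₀ : (0 : ℝ) < q := by exact_mod_cast hq
  refine ⟨j * p + 1, j * q, one_le_mul_of_one_le_of_one_le (by exact_mod_cast hj₁) hq, ?_, ?_, ?_⟩
  · push_cast
    nlinarith
  · push_cast
    linarith
  · push_cast
    linarith

/-- Otherwise `(p - 1, q)` would be a better upper approximation. -/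
lemma GoodUpper.sub_mul_lt_one (hα : Irrational α) {p q : ℤ} (h : GoodUpper α p q) :
    (p : ℝ) - q * α < 1 := by
  obtain ⟨hq, hpos, hgood⟩ := h
  by_contra hle
  have hne : ((p - 1 : ℤ) : ℝ) - q * α ≠ 0 := fun h0 =>
    hα.mul_intCast_ne_intCast (k := q) (by omega) (p - 1) (by linarith)
  have hpos' : 0 < ((p - 1 : ℤ) : ℝ) - q * α :=
    lt_of_le_of_ne (by push_cast; linarith [not_lt.1 hle]) hne.symm
  have := hgood (p - 1) q (by simp) hq le_rfl hpos'
  rw [abs_of_pos hpos, abs_of_pos hpos'] at this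
  push_cast at this
  linarith

end Irrational

section Coordinates

variable {α β : ℝ}

noncomputable def basisHomeomorph (hβα : β < α) : ℝ × ℝ ≃ₜ ℝ × ℝ where
  toFun q := (q.1 + q.2, q.1 * α + q.2 * β)
  invFun p := ((p.2 - β * p.1) / (α - β), (α * p.1 - p.2) / (α - β))
  left_inv q := by
    have := sub_ne_zero.2 hβα.ne'
    ext <;> field_simp <;> ring
  right_inv p := by
    have := sub_ne_zero.2 hβα.ne'
    ext <;> field_simp <;> ring
  continuous_toFun := by fun_prop
  continuous_invFun := by fun_prop

lemma Rpar_eq_image (hβα : β < α) (m n : ℤ) :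
    Rpar α β m n =
      basisHomeomorph hβα '' (uIcc 0 (tcoord α β m n) ×ˢ uIcc 0 (scoord α β m n)) := by
  ext p
  constructor
  · rintro ⟨a, b, ha, hb, rfl⟩
    exact ⟨(a, b), ⟨ha, hb⟩, rfl⟩
  · rintro ⟨⟨a, b⟩, ⟨ha, hb⟩, rfl⟩
    exact ⟨a, b, ha, hb, rfl⟩

lemma intCast_mem_interior_Rpar_iff (hβα : β < α) (m n k l : ℤ) :
    ((k : ℝ), (l : ℝ)) ∈ interior (Rpar α β m n) ↔
      tcoord α β k l ∈ uIoo 0 (tcoord α β m n) ∧ scoord α β k l ∈ uIoo 0 (scoord α β m n) := by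
  rw [Rpar_eq_image hβα, ← Homeomorph.image_interior, interior_prod_eq, interior_uIcc,
    interior_uIcc, Homeomorph.image_eq_preimage_symm]
  rfl

lemma noLatticeInterior_iff (hβα : β < α) (m n : ℤ) :
    NoLatticeInterior α β m n ↔ ∀ k l : ℤ,
      ¬ (tcoord α β k l ∈ uIoo 0 (tcoord α β m n) ∧ scoord α β k l ∈ uIoo 0 (scoord α β m n)) := by
  simp only [NoLatticeInterior, ← intCast_mem_interior_Rpar_iff hβα]
  constructor
  · exact fun h k l hkl => h _ hkl ⟨k, l, rfl⟩
  · rintro h p hp ⟨k, l, rfl⟩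
    exact h k l hp

lemma tcoord_add_scoord (hβα : β < α) (k l : ℤ) : tcoord α β k l + scoord α β k l = k := by
  have := sub_ne_zero.2 hβα.ne'
  simp only [tcoord, scoord]
  field_simp
  ring

lemma sub_mul_scoord (hβα : β < α) (k l : ℤ) : (α - β) * scoord α β k l = α * k - l := by
  have := sub_ne_zero.2 hβα.ne'
  simp only [scoord]
  field_simp

lemma intCast_sub_mul_eq_neg_sub_mul_scoord (hβα : β < α) (p q : ℤ) :
    (p : ℝ) - q * α = -((α - β) * scoord α β q p) := by
  rw [sub_mul_scoord hβα]
  ring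

lemma tcoord_sub (m n k l : ℤ) : tcoord α β (m - k) (n - l) = tcoord α β m n - tcoord α β k l := by
  simp only [tcoord]
  push_cast
  ring

lemma scoord_sub (m n k l : ℤ) : scoord α β (m - k) (n - l) = scoord α β m n - scoord α β k l := by
  simp only [scoord]
  push_cast
  ring

end Coordinates

section Parallelogram

variable {α β : ℝ}

lemma eq_of_scoord_eq (hα : Irrational α) (hβα : β < α) {k l k' l' : ℤ}
    (h : scoord α β k l = scoord α β k' l') : k = k' ∧ l = l' := by
  have h' : α * k - l = α * k' - l' := by rw [← sub_mul_scoord hβα, h, sub_mul_scoord hβα]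
  have hk : k = k' := by
    by_contra hk
    refine hα.mul_intCast_ne_intCast (sub_ne_zero.2 hk) (l - l') ?_
    push_cast
    linarith
  subst hk
  exact ⟨rfl, by exact_mod_cast (by linarith : (l : ℝ) = l')⟩

lemma scoord_ne_zero (hα : Irrational α) (hβα : β < α) {k : ℤ} (hk : k ≠ 0) (l : ℤ) :
    scoord α β k l ≠ 0 := fun h =>
  hk (eq_of_scoord_eq hα hβα (k' := 0) (l' := 0) (by simpa [scoord] using h)).1

lemma sub_mul_scoord_floor (hα : Irrational α) (hβα : β < α) {k : ℤ} (hk : k ≠ 0) :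
    (α - β) * scoord α β k ⌊α * k⌋ = Int.fract (α * k) ∧ 0 < Int.fract (α * k) :=
  ⟨by rw [sub_mul_scoord hβα, Int.self_sub_floor],
    Int.fract_pos.2 (hα.mul_intCast_ne_intCast hk _)⟩

lemma goodLower_iff_scoord (hβα : β < α) (p q : ℤ) :
    GoodLower α p q ↔ 1 ≤ q ∧ 0 < scoord α β q p ∧ ∀ p' q' : ℤ, (p', q') ≠ (p, q) →
      1 ≤ q' → q' ≤ q → 0 < scoord α β q' p' → scoord α β q p < scoord α β q' p' := by
  have hD : 0 < α - β := sub_pos.2 hβα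
  simp only [GoodLower, intCast_sub_mul_eq_neg_sub_mul_scoord hβα, neg_lt_zero, abs_neg, abs_mul,
    abs_of_pos hD, mul_pos_iff_of_pos_left hD, mul_lt_mul_iff_right₀ hD]
  refine and_congr_right fun _ => and_congr_right fun hs => ?_
  constructor <;> intro h p' q' hne h₁ h₂ hs' <;> have := h p' q' hne h₁ h₂ hs' <;>
    rwa [abs_of_pos hs, abs_of_pos hs'] at *

lemma goodUpper_iff_scoord (hβα : β < α) (p q : ℤ) :
    GoodUpper α p q ↔ 1 ≤ q ∧ scoord α β q p < 0 ∧ ∀ p' q' : ℤ, (p', q') ≠ (p, q) →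
      1 ≤ q' → q' ≤ q → scoord α β q' p' < 0 → scoord α β q' p' < scoord α β q p := by
  have hD : 0 < α - β := sub_pos.2 hβα
  have hneg : ∀ x : ℝ, (α - β) * x < 0 ↔ x < 0 := fun x =>
    ⟨fun h => neg_of_mul_neg_right h hD.le, mul_neg_of_pos_of_neg hD⟩
  simp only [GoodUpper, intCast_sub_mul_eq_neg_sub_mul_scoord hβα, neg_pos, abs_neg, abs_mul,
    abs_of_pos hD, hneg, mul_lt_mul_iff_right₀ hD]
  refine and_congr_right fun _ => and_congr_right fun hs => ?_
  constructor <;> intro h p' q' hne h₁ h₂ hs' <;> have := h p' q' hne h₁ h₂ hs'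
  · rw [abs_of_neg hs, abs_of_neg hs'] at this
    linarith
  · rw [abs_of_neg hs, abs_of_neg hs']
    linarith

lemma exists_coords_mem_Ioo_of_one_div_le (hα : Irrational α) (hβα : β < α) {S T : ℝ}
    (hS : 1 / (α - β) ≤ S) (hT : 1 / (α - β) + 1 ≤ T) :
    ∃ k l : ℤ, tcoord α β k l ∈ Ioo 0 T ∧ scoord α β k l ∈ Ioo 0 S := by
  have hD : 0 < α - β := sub_pos.2 hβα
  set k : ℤ := ⌊1 / (α - β)⌋ + 1
  have hk : 1 / (α - β) < k := by
    push_cast [k]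
    exact Int.lt_floor_add_one _
  have hk₁ : (k : ℝ) ≤ 1 / (α - β) + 1 := by
    push_cast [k]
    linarith [Int.floor_le (1 / (α - β))]
  have hk₀ : k ≠ 0 := by
    have : (0 : ℝ) < k := lt_trans (by positivity) hk
    exact_mod_cast this.ne'
  obtain ⟨hfk, hfk₀⟩ := sub_mul_scoord_floor hα hβα hk₀
  have hs : scoord α β k ⌊α * k⌋ < 1 / (α - β) := lt_of_mul_lt_mul_left
    (by rw [mul_one_div_cancel hD.ne']; linarith [Int.fract_lt_one (α * k)]) hD.le
  have hs₀ : 0 < scoord α β k ⌊α * k⌋ := pos_of_mul_pos_right (by linarith) hD.le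
  refine ⟨k, ⌊α * k⌋, ⟨?_, ?_⟩, hs₀, hs.trans_le hS⟩ <;>
    linarith [tcoord_add_scoord hβα k ⌊α * k⌋]

lemma exists_coords_mem_Ioo_of_tcoord_nonpos (hα : Irrational α) (hβα : β < α) {S T : ℝ}
    (hT : 2 / (α - β) + 1 ≤ T) {k' l' : ℤ} (hk' : 0 ≤ k') (ht' : tcoord α β k' l' ≤ 0)
    (hs' : scoord α β k' l' ∈ Ioo 0 S) :
    ∃ k l : ℤ, tcoord α β k l ∈ Ioo 0 T ∧ scoord α β k l ∈ Ioo 0 S := by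
  have hD : 0 < α - β := sub_pos.2 hβα
  have hDinv : (α - β) * (1 / (α - β)) = 1 := mul_one_div_cancel hD.ne'
  have h2D : 2 / (α - β) = 2 * (1 / (α - β)) := by ring
  rcases le_or_gt (1 / (α - β)) S with hS | hS
  · exact exists_coords_mem_Ioo_of_one_div_le hα hβα hS
      (by linarith [(by positivity : 0 < 1 / (α - β))])
  -- Adding `k'` to `k` moves `Int.fract (α * k)` by `δ < (α - β) * S`, so it cannot jump over
  -- `[0, (α - β) * S)`; as `t' ≤ 0` gives `(α - β) * k' ≤ δ`, the fewer than `1 / δ` steps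
  -- needed move `k` by less than `1 / (α - β)`.
  set δ := (α - β) * scoord α β k' l' with hδdef
  have hδ : α * k' - l' = δ := (sub_mul_scoord hβα k' l').symm
  have hδ₀ : 0 < δ := mul_pos hD hs'.1
  have hδS : δ < (α - β) * S := mul_lt_mul_of_pos_left hs'.2 hD
  have hS₀ : 0 < S := hs'.1.trans hs'.2
  obtain ⟨j, hj₁, hjS⟩ := exists_nat_mul_lt_one_fract_lt (α * ⌈S⌉) hδ₀ hδS
  set k : ℤ := ⌈S⌉ + j * k'
  have hk : (k : ℝ) = ⌈S⌉ + j * k' := by push_cast [k]; ring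
  have hk₀ : k ≠ 0 := by positivity
  have hfract : Int.fract (α * k) = Int.fract (α * ⌈S⌉ + j * δ) := by
    have : α * (k : ℝ) = α * ⌈S⌉ + j * δ + ((j * l' : ℤ) : ℝ) := by
      rw [hk, ← hδ]
      push_cast
      ring
    rw [this, Int.fract_add_intCast]
  have hk'le : (k' : ℝ) ≤ scoord α β k' l' := by linarith [tcoord_add_scoord hβα k' l']
  have hjk' : (α - β) * (j * k') ≤ j * δ := by
    rw [hδdef, mul_left_comm]
    gcongr
  obtain ⟨hfk, hfk₀⟩ := sub_mul_scoord_floor hα hβα hk₀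
  have hs : scoord α β k ⌊α * k⌋ < S := lt_of_mul_lt_mul_left (by linarith) hD.le
  have hs₀ : 0 < scoord α β k ⌊α * k⌋ := pos_of_mul_pos_right (by linarith) hD.le
  have hjk'D : j * (k' : ℝ) < 1 / (α - β) := lt_of_mul_lt_mul_left (by linarith) hD.le
  have hjk'₀ : 0 ≤ j * (k' : ℝ) := by positivity
  refine ⟨k, ⌊α * k⌋, ⟨?_, ?_⟩, hs₀, hs⟩ <;>
    linarith [tcoord_add_scoord hβα k ⌊α * k⌋, Int.le_ceil S, Int.ceil_lt_add_one S]

variable {m n : ℤ}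

lemma noLatticeInterior_of_goodLower (hβα : β < α) (hT : 0 < tcoord α β m n)
    (h : GoodLower α n m) : NoLatticeInterior α β m n := by
  obtain ⟨-, hS, hgood⟩ := (goodLower_iff_scoord hβα n m).1 h
  rw [noLatticeInterior_iff hβα, uIoo_of_lt hT, uIoo_of_lt hS]
  rintro k l ⟨⟨ht₀, ht⟩, hs₀, hs⟩
  have hk₁ : 1 ≤ k := by
    have : (0 : ℝ) < k := by linarith [tcoord_add_scoord hβα k l]
    exact_mod_cast this
  have hkm : k < m := by
    have : (k : ℝ) < m := by linarith [tcoord_add_scoord hβα k l, tcoord_add_scoord hβα m n]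
    exact_mod_cast this
  exact (hgood l k (fun h => hkm.ne (Prod.mk.inj h).2) hk₁ hkm.le hs₀).not_gt hs

lemma goodLower_of_noLatticeInterior (hα : Irrational α) (hβα : β < α) (hm : 1 ≤ m)
    (hS : 0 < scoord α β m n) (hT : 2 / (α - β) + 1 ≤ tcoord α β m n)
    (h : NoLatticeInterior α β m n) : GoodLower α n m := by
  have hT₀ : 0 < tcoord α β m n := lt_of_lt_of_le (by have := sub_pos.2 hβα; positivity) hT
  rw [noLatticeInterior_iff hβα, uIoo_of_lt hT₀, uIoo_of_lt hS] at h
  refine (goodLower_iff_scoord hβα n m).2 ⟨hm, hS, fun p' q' hne hq₁ hqm hs₀ => ?_⟩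
  by_contra hle
  have hs : scoord α β q' p' < scoord α β m n := (not_lt.1 hle).lt_of_ne fun heq => by
    obtain ⟨rfl, rfl⟩ := eq_of_scoord_eq hα hβα heq
    exact hne rfl
  rcases le_or_gt (tcoord α β q' p') 0 with ht₀ | ht₀
  · obtain ⟨k, l, hkl⟩ := exists_coords_mem_Ioo_of_tcoord_nonpos hα hβα hT (by omega) ht₀ ⟨hs₀, hs⟩
    exact h k l hkl
  rcases lt_or_ge (tcoord α β q' p') (tcoord α β m n) with ht | ht
  · exact h q' p' ⟨⟨ht₀, ht⟩, hs₀, hs⟩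
  -- the central symmetry `(k, l) ↦ (m - k, n - l)` of the parallelogram moves the point to `t ≤ 0`
  obtain ⟨k, l, hkl⟩ := exists_coords_mem_Ioo_of_tcoord_nonpos hα hβα hT (S := scoord α β m n)
    (k' := m - q') (l' := n - p') (by omega) (by rw [tcoord_sub]; linarith)
    (by rw [scoord_sub]; constructor <;> linarith)
  exact h k l hkl

lemma goodUpper_of_noLatticeInterior (hα : Irrational α) (hβα : β < α) (hm : 1 ≤ m)
    (hS : scoord α β m n < 0) (h : NoLatticeInterior α β m n) : GoodUpper α n m := by
  have hT : 0 < tcoord α β m n := by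
    have : (1 : ℝ) ≤ m := by exact_mod_cast hm
    linarith [tcoord_add_scoord hβα m n]
  rw [noLatticeInterior_iff hβα, uIoo_of_lt hT, uIoo_of_gt hS] at h
  refine (goodUpper_iff_scoord hβα n m).2 ⟨hm, hS, fun p' q' hne hq₁ hqm hs₀ => ?_⟩
  by_contra hle
  have hs : scoord α β m n < scoord α β q' p' := (not_lt.1 hle).lt_of_ne fun heq => by
    obtain ⟨rfl, rfl⟩ := eq_of_scoord_eq hα hβα heq
    exact hne rfl
  have hq : (1 : ℝ) ≤ q' ∧ (q' : ℝ) ≤ m := ⟨by exact_mod_cast hq₁, by exact_mod_cast hqm⟩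
  refine h q' p' ⟨⟨?_, ?_⟩, hs, hs₀⟩ <;>
    linarith [tcoord_add_scoord hβα q' p', tcoord_add_scoord hβα m n]

lemma GoodUpper.not_coords_mem_Ioo_of_le (hα : Irrational α) (hβα : β < α)
    (h : GoodUpper α n m) (hm : 1 < (α - β) * m) {k l : ℤ} (hkm : k ≤ m) :
    ¬ (0 < tcoord α β k l ∧ scoord α β k l ∈ Ioo (scoord α β m n) 0) := by
  rintro ⟨ht₀, hs, hs₀⟩
  have hD : 0 < α - β := sub_pos.2 hβα
  obtain ⟨-, -, hgood⟩ := (goodUpper_iff_scoord hβα n m).1 h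
  have hS₁ : -1 < (α - β) * scoord α β m n := by
    rw [sub_mul_scoord hβα]
    linarith [h.sub_mul_lt_one hα]
  have hkl := tcoord_add_scoord hβα k l
  have hw := sub_mul_scoord hβα k l
  have hDs := mul_lt_mul_of_pos_left hs hD
  have hDs₀ := mul_neg_of_pos_of_neg hD hs₀
  rcases lt_trichotomy k 0 with hk | rfl | hk
  · -- `(-l, -k)` is a lower approximation; its upper companion beats `(n, m)`
    obtain ⟨p, q, hq₁, hqw, hw₀, hw₁⟩ := hα.exists_upper_of_lower (p := -l) (q := -k)
      (by omega) (by push_cast; linarith) (by push_cast; linarith)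
    have hw' : α * ((-k : ℤ) : ℝ) - ((-l : ℤ) : ℝ) = -((α - β) * scoord α β k l) := by
      push_cast
      linarith
    rw [hw'] at hqw hw₁
    have hqD : (α - β) * q < 1 := by
      have : (α - β) * q * -((α - β) * scoord α β k l) < 1 * -((α - β) * scoord α β k l) := by
        push_cast at hqw
        nlinarith
      exact lt_of_mul_lt_mul_right this (by linarith)
    have hqm : q < m := by
      have : (q : ℝ) < m := lt_of_mul_lt_mul_left (by linarith) hD.le
      exact_mod_cast this
    have hsqp := sub_mul_scoord hβα q p
    have := hgood p q (fun h => hqm.ne (Prod.mk.inj h).2) hq₁ hqm.le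
      (neg_of_mul_neg_right (by linarith) hD.le)
    linarith [mul_lt_mul_of_pos_left this hD]
  · simp only [Int.cast_zero, mul_zero, zero_sub] at hw
    have h₀ : (0 : ℤ) < l := by exact_mod_cast (by linarith : (0 : ℝ) < l)
    have h₁ : l < 1 := by exact_mod_cast (by linarith : (l : ℝ) < 1)
    omega
  · refine (hgood l k (fun h => ?_) hk hkm hs₀).not_gt hs
    obtain ⟨rfl, rfl⟩ := Prod.mk.inj h
    exact lt_irrefl _ hs

lemma noLatticeInterior_of_goodUpper (hα : Irrational α) (hβα : β < α)
    (hT : 2 / (α - β) ≤ tcoord α β m n) (h : GoodUpper α n m) : NoLatticeInterior α β m n := by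
  have hD : 0 < α - β := sub_pos.2 hβα
  obtain ⟨hm₁, hS, -⟩ := (goodUpper_iff_scoord hβα n m).1 h
  have hm : 1 < (α - β) * m := by
    have hT' : 2 ≤ (α - β) * tcoord α β m n := by
      rwa [← mul_le_mul_iff_right₀ hD, mul_div_cancel₀ _ hD.ne'] at hT
    have hsum : (α - β) * tcoord α β m n + (α - β) * scoord α β m n = (α - β) * m := by
      rw [← mul_add, tcoord_add_scoord hβα]
    linarith [sub_mul_scoord hβα m n, h.sub_mul_lt_one hα]
  rw [noLatticeInterior_iff hβα, uIoo_of_lt (lt_of_lt_of_le (by positivity) hT), uIoo_of_gt hS]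
  rintro k l ⟨ht, hs⟩
  rcases le_or_gt k m with hkm | hkm
  · exact h.not_coords_mem_Ioo_of_le hα hβα hm hkm ⟨ht.1, hs⟩
  -- the central symmetry `(k, l) ↦ (m - k, n - l)` of the parallelogram moves the point to `k < 0`
  refine h.not_coords_mem_Ioo_of_le hα hβα hm (k := m - k) (l := n - l) (by omega) ⟨?_, ?_⟩
  · rw [tcoord_sub]
    linarith [ht.2]
  · rw [scoord_sub]
    constructor <;> linarith [hs.1, hs.2]

end Parallelogram

theorem stmt4_general (A : Matrix (Fin 2) (Fin 2) ℤ)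
    (lam α β : ℝ)
    (hlam0 : 0 < lam) (hlam1 : lam < 1)
    (hAα0 : (A 0 0 : ℝ) + A 0 1 * α = lam)
    (hAα1 : (A 1 0 : ℝ) + A 1 1 * α = lam * α)
    (hβα : β < α) :
    ∃ t₀ > (0 : ℝ), ∀ m n : ℤ, 1 ≤ m → 0 ≤ n → t₀ ≤ tcoord α β m n →
      (NoLatticeInterior α β m n ↔ (GoodLower α n m ∨ GoodUpper α n m)) := by
  have hα : Irrational α :=
    irrational_of_eigenvector A hlam0.ne' (abs_lt.2 ⟨by linarith, hlam1⟩) hAα0 hAα1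
  have hD : 0 < α - β := sub_pos.2 hβα
  refine ⟨2 / (α - β) + 1, by positivity, fun m n hm _ hT => ?_⟩
  rcases (scoord_ne_zero hα hβα (by omega : m ≠ 0) n).lt_or_gt with hS | hS
  · have hL : ¬ GoodLower α n m := fun h => ((goodLower_iff_scoord hβα n m).1 h).2.1.not_gt hS
    rw [or_iff_right hL]
    exact ⟨goodUpper_of_noLatticeInterior hα hβα hm hS,
      noLatticeInterior_of_goodUpper hα hβα (by linarith)⟩
  · have hU : ¬ GoodUpper α n m := fun h => ((goodUpper_iff_scoord hβα n m).1 h).2.1.not_gt hS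
    rw [or_iff_left hU]
    exact ⟨goodLower_of_noLatticeInterior hα hβα hm hS hT,
      noLatticeInterior_of_goodLower hβα (lt_of_lt_of_le (by positivity) hT)⟩

/-- Fix `A ∈ SL(2,ℤ)` with eigenvalues `0 < λ < 1 < μ` and eigenvectors
`(1,α)`, `(1,β)` with `α > β`, `α > 0`. There exists `t₀ > 0` such that for every
`(m,n) ∈ ℤ²` with `m ≥ 1`, `n ≥ 0` and `t_{(m,n)} ≥ t₀`: the interior of `R_{(m,n)}`
contains no point of `ℤ²` if and only if `(n,m)` is a good lower or a good upper
approximation of the second kind of `α`. -/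
theorem stmt4 (A : Matrix (Fin 2) (Fin 2) ℤ) (hdet : A.det = 1)
    (lam mu α β : ℝ)
    (hlam0 : 0 < lam) (hlam1 : lam < 1) (hmu : 1 < mu)
    (hAα0 : (A 0 0 : ℝ) + A 0 1 * α = lam)
    (hAα1 : (A 1 0 : ℝ) + A 1 1 * α = lam * α)
    (hAβ0 : (A 0 0 : ℝ) + A 0 1 * β = mu)
    (hAβ1 : (A 1 0 : ℝ) + A 1 1 * β = mu * β)
    (hβα : β < α) (hα : 0 < α) :
    ∃ t₀ > (0 : ℝ), ∀ m n : ℤ, 1 ≤ m → 0 ≤ n → t₀ ≤ tcoord α β m n →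
      (NoLatticeInterior α β m n ↔ (GoodLower α n m ∨ GoodUpper α n m)) :=
  stmt4_general A lam α β hlam0 hlam1 hAα0 hAα1 hβα
end

section
/- For every (m,n) ∈ ℤ², writing (m′,n′)ᵀ = A·(m,n)ᵀ, the following hold: (i) t_{(m′,n′)} = λ·t_{(m,n)}; (ii) n′ − αm′ has the same sign as n − αm; (iii) the interior of R_{(m′,n′)} contains a point of ℤ² if and only if the interior of R_{(m,n)} does. Consequently, the map t ↦ λ·t restricts to strictly increasing bijections of T⁻ onto T⁻ and of T⁺ onto T⁺, and for every t ∈ T one has λᵏ·t → 0 as k → +∞ and λ⁻ᵏ·t → +∞ as k → +∞. -/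
/-- `T⁻`: the set of values `t_{(m,n)} > 0` with `n − αm < 0` such that the interior of
`R_{(m,n)}` contains no point of `ℤ²`. -/
def Tminus (α β : ℝ) : Set ℝ :=
  {t | ∃ m n : ℤ, t = tcoord α β m n ∧ 0 < t ∧ (n : ℝ) - α * m < 0 ∧
    NoLatticeInterior α β m n}

/-- `T⁺`: the set of values `t_{(m,n)} > 0` with `n − αm > 0` such that the interior of
`R_{(m,n)}` contains no point of `ℤ²`. -/
def Tplus (α β : ℝ) : Set ℝ :=
  {t | ∃ m n : ℤ, t = tcoord α β m n ∧ 0 < t ∧ 0 < (n : ℝ) - α * m ∧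
    NoLatticeInterior α β m n}

/-- `T = T⁺ ∪ T⁻`. -/
def Tset (α β : ℝ) : Set ℝ := Tplus α β ∪ Tminus α β

/-!
In the basis `(1, α), (1, β)` the matrix `A` acts as `diag(λ, μ)`: it multiplies `t` by `λ` and
`s` by `μ`, and `n − αm = −(α − β) s` changes by the positive factor `μ`. Hence `A` maps the
parallelogram `R_{(m,n)}` onto `R_{A(m,n)}`. As `det A = 1`, `A` is a homeomorphism of `ℝ²`
restricting to a bijection of `ℤ²`, so it matches the interior lattice points of the two
parallelograms; bijectivity on `ℤ²` also makes `t ↦ λt` onto `T⁻` and `T⁺`.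
-/

open Set Filter

section

variable {A : Matrix (Fin 2) (Fin 2) ℤ} {α β a b : ℝ}

def HasSlopeEigenvector (A : Matrix (Fin 2) (Fin 2) ℤ) (α a : ℝ) : Prop :=
  (A 0 0 : ℝ) + A 0 1 * α = a ∧ (A 1 0 : ℝ) + A 1 1 * α = a * α

theorem cast_apply_sub_mul (hα : HasSlopeEigenvector A α a) (hβ : HasSlopeEigenvector A β b)
    (hαβ : α ≠ β) (m n : ℤ) :
    ((A 1 0 * m + A 1 1 * n : ℤ) : ℝ) - β * ((A 0 0 * m + A 0 1 * n : ℤ) : ℝ)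
      = a * ((n : ℝ) - β * m) := by
  obtain ⟨h0, h1⟩ := hα
  obtain ⟨h2, h3⟩ := hβ
  have key : ((A 1 1 : ℝ) - β * A 0 1 - a) * (α - β) = 0 := by
    linear_combination h1 - h3 - β * (h0 - h2)
  have hs : (A 1 1 : ℝ) - β * A 0 1 = a := by
    linear_combination (mul_eq_zero.mp key).resolve_right (sub_ne_zero.mpr hαβ)
  push_cast
  linear_combination (n - β * m : ℝ) * hs + (m : ℝ) * h3 - β * m * h2

theorem tcoord_apply (hα : HasSlopeEigenvector A α a) (hβ : HasSlopeEigenvector A β b)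
    (hαβ : α ≠ β) (m n : ℤ) :
    tcoord α β (A 0 0 * m + A 0 1 * n) (A 1 0 * m + A 1 1 * n) = a * tcoord α β m n := by
  rw [tcoord, tcoord, cast_apply_sub_mul hα hβ hαβ, mul_div_assoc]

theorem scoord_apply (hα : HasSlopeEigenvector A α a) (hβ : HasSlopeEigenvector A β b)
    (hαβ : α ≠ β) (m n : ℤ) :
    scoord α β (A 0 0 * m + A 0 1 * n) (A 1 0 * m + A 1 1 * n) = b * scoord α β m n := by
  rw [scoord, scoord, ← neg_sub, cast_apply_sub_mul hβ hα hαβ.symm, ← mul_div_assoc]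
  ring

theorem image_Rpar {L : ℝ × ℝ → ℝ × ℝ}
    (hL : ∀ u v : ℝ, L (u + v, u * α + v * β) = (a * u + b * v, a * u * α + b * v * β))
    {m n m' n' : ℤ} (ht : tcoord α β m' n' = a * tcoord α β m n)
    (hs : scoord α β m' n' = b * scoord α β m n) :
    L '' Rpar α β m n = Rpar α β m' n' := by
  have scale (c x : ℝ) : uIcc 0 (c * x) = (c * ·) '' uIcc 0 x := by
    rw [image_const_mul_uIcc, mul_zero]
  ext z
  simp only [Rpar, ht, hs, scale, mem_image, mem_ofPred_eq]
  constructor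
  · rintro ⟨_, ⟨u, v, hu, hv, rfl⟩, rfl⟩
    exact ⟨a * u, b * v, ⟨u, hu, rfl⟩, ⟨v, hv, rfl⟩, hL u v⟩
  · rintro ⟨_, _, ⟨u, hu, rfl⟩, ⟨v, hv, rfl⟩, rfl⟩
    exact ⟨_, ⟨u, v, hu, hv, rfl⟩, hL u v⟩

theorem exists_apply_eq_of_det_eq_one (hA : A.det = 1) (k l : ℤ) :
    ∃ m n : ℤ, A 0 0 * m + A 0 1 * n = k ∧ A 1 0 * m + A 1 1 * n = l := by
  rw [Matrix.det_fin_two] at hA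
  exact ⟨A 1 1 * k - A 0 1 * l, A 0 0 * l - A 1 0 * k,
    by linear_combination k * hA, by linear_combination l * hA⟩

theorem cast_det_eq_one (hA : A.det = 1) : (A 0 0 : ℝ) * A 1 1 - A 0 1 * A 1 0 = 1 := by
  rw [Matrix.det_fin_two] at hA
  exact_mod_cast hA

variable (A) in
def homeomorphOfDetEqOne (hA : A.det = 1) : (ℝ × ℝ) ≃ₜ (ℝ × ℝ) where
  toFun v := ((A 0 0 : ℝ) * v.1 + A 0 1 * v.2, (A 1 0 : ℝ) * v.1 + A 1 1 * v.2)
  invFun v := ((A 1 1 : ℝ) * v.1 - A 0 1 * v.2, (A 0 0 : ℝ) * v.2 - A 1 0 * v.1)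
  left_inv v := by
    ext
    · linear_combination v.1 * cast_det_eq_one hA
    · linear_combination v.2 * cast_det_eq_one hA
  right_inv v := by
    ext
    · linear_combination v.1 * cast_det_eq_one hA
    · linear_combination v.2 * cast_det_eq_one hA
  continuous_toFun := by fun_prop
  continuous_invFun := by fun_prop

theorem homeomorphOfDetEqOne_apply (hA : A.det = 1) (v : ℝ × ℝ) :
    homeomorphOfDetEqOne A hA v
      = ((A 0 0 : ℝ) * v.1 + A 0 1 * v.2, (A 1 0 : ℝ) * v.1 + A 1 1 * v.2) :=
  rfl

theorem exists_int_homeomorphOfDetEqOne_iff (hA : A.det = 1) (p : ℝ × ℝ) :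
    (∃ k l : ℤ, homeomorphOfDetEqOne A hA p = ((k : ℝ), (l : ℝ))) ↔
      ∃ k l : ℤ, p = ((k : ℝ), (l : ℝ)) := by
  have hcast (m n : ℤ) : homeomorphOfDetEqOne A hA ((m : ℝ), (n : ℝ))
      = (((A 0 0 * m + A 0 1 * n : ℤ) : ℝ), ((A 1 0 * m + A 1 1 * n : ℤ) : ℝ)) := by
    rw [homeomorphOfDetEqOne_apply]; push_cast; rfl
  constructor
  · rintro ⟨k, l, hkl⟩
    obtain ⟨m, n, rfl, rfl⟩ := exists_apply_eq_of_det_eq_one hA k l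
    exact ⟨m, n, (homeomorphOfDetEqOne A hA).injective (hkl.trans (hcast m n).symm)⟩
  · rintro ⟨m, n, rfl⟩
    exact ⟨_, _, hcast m n⟩

theorem noLatticeInterior_apply_iff (hA : A.det = 1) (hα : HasSlopeEigenvector A α a)
    (hβ : HasSlopeEigenvector A β b) (hαβ : α ≠ β) (m n : ℤ) :
    NoLatticeInterior α β (A 0 0 * m + A 0 1 * n) (A 1 0 * m + A 1 1 * n) ↔
      NoLatticeInterior α β m n := by
  have hmaps : homeomorphOfDetEqOne A hA '' Rpar α β m n
      = Rpar α β (A 0 0 * m + A 0 1 * n) (A 1 0 * m + A 1 1 * n) := by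
    refine image_Rpar (fun u v => ?_) (tcoord_apply hα hβ hαβ m n) (scoord_apply hα hβ hαβ m n)
    obtain ⟨h0, h1⟩ := hα
    obtain ⟨h2, h3⟩ := hβ
    rw [homeomorphOfDetEqOne_apply]
    ext
    · linear_combination u * h0 + v * h2
    · linear_combination u * h1 + v * h3
  rw [NoLatticeInterior, NoLatticeInterior, ← hmaps, ← Homeomorph.image_interior,
    forall_mem_image]
  simp only [exists_int_homeomorphOfDetEqOne_iff]

theorem bijOn_mul_of_det_eq_one (hA : A.det = 1) {c : ℝ} (hc : 0 < c) {τ : ℤ → ℤ → ℝ}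
    (hτ : ∀ m n, τ (A 0 0 * m + A 0 1 * n) (A 1 0 * m + A 1 1 * n) = c * τ m n)
    {P : ℤ → ℤ → Prop} (hP : ∀ m n, P (A 0 0 * m + A 0 1 * n) (A 1 0 * m + A 1 1 * n) ↔ P m n) :
    BijOn (c * ·) {t | ∃ m n, t = τ m n ∧ 0 < t ∧ P m n}
      {t | ∃ m n, t = τ m n ∧ 0 < t ∧ P m n} := by
  refine ⟨?_, (mul_right_injective₀ hc.ne').injOn, ?_⟩
  · rintro _ ⟨m, n, rfl, ht, hmn⟩
    exact ⟨_, _, (hτ m n).symm, mul_pos hc ht, (hP m n).2 hmn⟩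
  · rintro _ ⟨k, l, rfl, ht, hkl⟩
    obtain ⟨m, n, rfl, rfl⟩ := exists_apply_eq_of_det_eq_one hA k l
    rw [hτ] at ht ⊢
    exact ⟨τ m n, ⟨m, n, rfl, pos_of_mul_pos_right ht hc.le, (hP m n).1 hkl⟩, rfl⟩

end

theorem pos_of_mem_Tset {α β t : ℝ} (ht : t ∈ Tset α β) : 0 < t := by
  rcases ht with ⟨m, n, -, ht, -⟩ | ⟨m, n, -, ht, -⟩ <;> exact ht

theorem tendsto_inv_pow_mul_atTop {c t : ℝ} (hc0 : 0 < c) (hc1 : c < 1) (ht : 0 < t) :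
    Tendsto (fun k : ℕ => (c ^ k)⁻¹ * t) atTop atTop := by
  simp_rw [← inv_pow]
  exact (tendsto_pow_atTop_atTop_of_one_lt ((one_lt_inv₀ hc0).mpr hc1)).atTop_mul_const ht

theorem stmt6_general (A : Matrix (Fin 2) (Fin 2) ℤ) (hdet : A.det = 1)
    (lam mu α β : ℝ)
    (hlam0 : 0 < lam) (hlam1 : lam < 1) (hmu : 1 < mu)
    (hAα0 : (A 0 0 : ℝ) + A 0 1 * α = lam)
    (hAα1 : (A 1 0 : ℝ) + A 1 1 * α = lam * α)
    (hAβ0 : (A 0 0 : ℝ) + A 0 1 * β = mu)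
    (hAβ1 : (A 1 0 : ℝ) + A 1 1 * β = mu * β)
    (hβα : β < α) :
    (∀ m n : ℤ,
      tcoord α β (A 0 0 * m + A 0 1 * n) (A 1 0 * m + A 1 1 * n) = lam * tcoord α β m n) ∧
    (∀ m n : ℤ,
      (((A 1 0 * m + A 1 1 * n : ℤ) : ℝ) - α * ((A 0 0 * m + A 0 1 * n : ℤ) : ℝ) < 0 ↔
        (n : ℝ) - α * m < 0) ∧
      (0 < ((A 1 0 * m + A 1 1 * n : ℤ) : ℝ) - α * ((A 0 0 * m + A 0 1 * n : ℤ) : ℝ) ↔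
        0 < (n : ℝ) - α * m)) ∧
    (∀ m n : ℤ,
      (NoLatticeInterior α β (A 0 0 * m + A 0 1 * n) (A 1 0 * m + A 1 1 * n) ↔
        NoLatticeInterior α β m n)) ∧
    StrictMonoOn (fun t : ℝ => lam * t) (Tset α β) ∧
    Set.BijOn (fun t : ℝ => lam * t) (Tminus α β) (Tminus α β) ∧
    Set.BijOn (fun t : ℝ => lam * t) (Tplus α β) (Tplus α β) ∧
    (∀ t ∈ Tset α β,
      Filter.Tendsto (fun k : ℕ => lam ^ k * t) Filter.atTop (nhds 0) ∧
      Filter.Tendsto (fun k : ℕ => (lam ^ k)⁻¹ * t) Filter.atTop Filter.atTop) := by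
  have hα : HasSlopeEigenvector A α lam := ⟨hAα0, hAα1⟩
  have hβ : HasSlopeEigenvector A β mu := ⟨hAβ0, hAβ1⟩
  have hmu0 : 0 < mu := one_pos.trans hmu
  have ht := tcoord_apply hα hβ hβα.ne'
  have hlattice := noLatticeInterior_apply_iff hdet hα hβ hβα.ne'
  have hsign (m n : ℤ) :
      (((A 1 0 * m + A 1 1 * n : ℤ) : ℝ) - α * ((A 0 0 * m + A 0 1 * n : ℤ) : ℝ) < 0 ↔
        (n : ℝ) - α * m < 0) ∧
      (0 < ((A 1 0 * m + A 1 1 * n : ℤ) : ℝ) - α * ((A 0 0 * m + A 0 1 * n : ℤ) : ℝ) ↔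
        0 < (n : ℝ) - α * m) := by
    rw [cast_apply_sub_mul hβ hα hβα.ne]
    exact ⟨⟨(neg_of_mul_neg_right · hmu0.le), mul_neg_of_pos_of_neg hmu0⟩,
      mul_pos_iff_of_pos_left hmu0⟩
  refine ⟨ht, hsign, hlattice, (strictMono_mul_left_of_pos hlam0).strictMonoOn _,
    bijOn_mul_of_det_eq_one hdet hlam0 ht fun m n => and_congr (hsign m n).1 (hlattice m n),
    bijOn_mul_of_det_eq_one hdet hlam0 ht fun m n => and_congr (hsign m n).2 (hlattice m n),
    fun t hT => ⟨?_, tendsto_inv_pow_mul_atTop hlam0 hlam1 (pos_of_mem_Tset hT)⟩⟩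
  simpa using (tendsto_pow_atTop_nhds_zero_of_lt_one hlam0.le hlam1).mul_const t

/-- For every `(m,n) ∈ ℤ²`, writing `(m′,n′)ᵀ = A·(m,n)ᵀ`:
(i) `t_{(m′,n′)} = λ·t_{(m,n)}`; (ii) `n′ − αm′` has the same sign as `n − αm`;
(iii) the interior of `R_{(m′,n′)}` contains a point of `ℤ²` iff the interior of
`R_{(m,n)}` does. Consequently `t ↦ λ·t` restricts to strictly increasing bijections of
`T⁻` onto `T⁻` and of `T⁺` onto `T⁺`, and for `t ∈ T` one has `λᵏ·t → 0` and
`λ⁻ᵏ·t → +∞` as `k → +∞`. -/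
theorem stmt6 (A : Matrix (Fin 2) (Fin 2) ℤ) (hdet : A.det = 1)
    (lam mu α β : ℝ)
    (hlam0 : 0 < lam) (hlam1 : lam < 1) (hmu : 1 < mu)
    (hAα0 : (A 0 0 : ℝ) + A 0 1 * α = lam)
    (hAα1 : (A 1 0 : ℝ) + A 1 1 * α = lam * α)
    (hAβ0 : (A 0 0 : ℝ) + A 0 1 * β = mu)
    (hAβ1 : (A 1 0 : ℝ) + A 1 1 * β = mu * β)
    (hβα : β < α) (hα : 0 < α) :
    (∀ m n : ℤ,
      tcoord α β (A 0 0 * m + A 0 1 * n) (A 1 0 * m + A 1 1 * n) = lam * tcoord α β m n) ∧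
    (∀ m n : ℤ,
      (((A 1 0 * m + A 1 1 * n : ℤ) : ℝ) - α * ((A 0 0 * m + A 0 1 * n : ℤ) : ℝ) < 0 ↔
        (n : ℝ) - α * m < 0) ∧
      (0 < ((A 1 0 * m + A 1 1 * n : ℤ) : ℝ) - α * ((A 0 0 * m + A 0 1 * n : ℤ) : ℝ) ↔
        0 < (n : ℝ) - α * m)) ∧
    (∀ m n : ℤ,
      (NoLatticeInterior α β (A 0 0 * m + A 0 1 * n) (A 1 0 * m + A 1 1 * n) ↔
        NoLatticeInterior α β m n)) ∧
    StrictMonoOn (fun t : ℝ => lam * t) (Tset α β) ∧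
    Set.BijOn (fun t : ℝ => lam * t) (Tminus α β) (Tminus α β) ∧
    Set.BijOn (fun t : ℝ => lam * t) (Tplus α β) (Tplus α β) ∧
    (∀ t ∈ Tset α β,
      Filter.Tendsto (fun k : ℕ => lam ^ k * t) Filter.atTop (nhds 0) ∧
      Filter.Tendsto (fun k : ℕ => (lam ^ k)⁻¹ * t) Filter.atTop Filter.atTop) :=
  stmt6_general A hdet lam mu α β hlam0 hlam1 hmu hAα0 hAα1 hAβ0 hAβ1 hβα
end

section
/- Each of the three ordered sets T⁻, T⁺, and T = T⁺ ∪ T⁻, with the order induced from ℝ, is order-isomorphic to (ℤ, ≤). -/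
/-!
In the coordinates `(t, s)` with respect to the eigenbasis `(1, α)`, `(1, β)`, the lattice `ℤ²`
becomes a set `Λ` with finitely many points in every compact set, invariant under the
hyperbolic map `(t, s) ↦ (λ t, μ s)` (given by `A`) and under its inverse (given by the
adjugate of `A`, as `det A = 1`). `T⁻` consists of the abscissas of the points `(t, s) ∈ Λ` of
the open first quadrant for which the box `(0, t) × (0, s)` contains no point of `Λ`, and `T⁺`
is the same set for `Λ` reflected in the `t`-axis. Such a set is invariant under multiplication
by `λ` and `λ⁻¹`, and meets every `[a, b]` with `a > 0` in finitely many points: a point of `Λ`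
in the quadrant with abscissa below `a` bounds the height of every empty box of width at
least `a`. A nonempty set of positive reals with these two properties is a locally finite
linear order without endpoints, hence order-isomorphic to `ℤ`.
-/

open Set Filter

lemma nonempty_orderIso_int_of_finite_Icc {X : Type*} [LinearOrder X] [Nonempty X]
    [NoMaxOrder X] [NoMinOrder X] (h : ∀ a b : X, (Icc a b).Finite) : Nonempty (X ≃o ℤ) := by
  let := LocallyFiniteOrder.ofFiniteIcc h
  let := LinearLocallyFiniteOrder.succOrder X
  let := LinearLocallyFiniteOrder.predOrder X
  exact ⟨orderIsoIntOfLinearSuccPredArch⟩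

structure IsScaleInvariantDiscrete (c : ℝ) (S : Set ℝ) : Prop where
  nonempty : S.Nonempty
  pos : ∀ x ∈ S, 0 < x
  finite_inter_Icc : ∀ a b, 0 < a → (S ∩ Icc a b).Finite
  mul_mem : ∀ x ∈ S, c * x ∈ S
  inv_mul_mem : ∀ x ∈ S, c⁻¹ * x ∈ S

namespace IsScaleInvariantDiscrete

variable {c : ℝ} {S S' : Set ℝ}

lemma union (hS : IsScaleInvariantDiscrete c S) (hS' : IsScaleInvariantDiscrete c S') :
    IsScaleInvariantDiscrete c (S ∪ S') where
  nonempty := hS.nonempty.mono subset_union_left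
  pos x hx := hx.elim (hS.pos x) (hS'.pos x)
  finite_inter_Icc a b ha := by
    rw [union_inter_distrib_right]
    exact (hS.finite_inter_Icc a b ha).union (hS'.finite_inter_Icc a b ha)
  mul_mem x hx := hx.imp (hS.mul_mem x) (hS'.mul_mem x)
  inv_mul_mem x hx := hx.imp (hS.inv_mul_mem x) (hS'.inv_mul_mem x)

lemma nonempty_orderIso_int (hS : IsScaleInvariantDiscrete c S) (hc0 : 0 < c) (hc1 : c < 1) :
    Nonempty (S ≃o ℤ) := by
  have : Nonempty S := hS.nonempty.to_subtype
  have : NoMaxOrder S := ⟨fun x => ⟨⟨c⁻¹ * x, hS.inv_mul_mem x x.2⟩,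
    lt_inv_mul_iff₀ hc0 |>.mpr (mul_lt_of_lt_one_left (hS.pos x x.2) hc1)⟩⟩
  have : NoMinOrder S := ⟨fun x => ⟨⟨c * x, hS.mul_mem x x.2⟩,
    mul_lt_of_lt_one_left (hS.pos x x.2) hc1⟩⟩
  refine nonempty_orderIso_int_of_finite_Icc fun x y => ?_
  refine ((hS.finite_inter_Icc x y (hS.pos x x.2)).preimage Subtype.val_injective.injOn).subset ?_
  exact fun z hz => ⟨z.2, hz⟩

end IsScaleInvariantDiscrete

section EmptyBoxes

def emptyBoxAbscissas (Λ : Set (ℝ × ℝ)) : Set ℝ :=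
  {t | ∃ s, (t, s) ∈ Λ ∧ 0 < t ∧ 0 < s ∧ ∀ q ∈ Λ, q ∉ Ioo 0 t ×ˢ Ioo 0 s}

variable {Λ : Set (ℝ × ℝ)} {a b : ℝ}

lemma mul_mem_emptyBoxAbscissas (ha : 0 < a) (hb : 0 < b)
    (hab : MapsTo (Prod.map (a * ·) (b * ·)) Λ Λ)
    (hab' : MapsTo (Prod.map (a⁻¹ * ·) (b⁻¹ * ·)) Λ Λ) {x : ℝ}
    (hx : x ∈ emptyBoxAbscissas Λ) : a * x ∈ emptyBoxAbscissas Λ := by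
  obtain ⟨s, hxs, hx, hs, hempty⟩ := hx
  refine ⟨b * s, hab hxs, by positivity, by positivity, fun q hq hbox => hempty _ (hab' hq) ?_⟩
  obtain ⟨⟨hq1, hq1'⟩, hq2, hq2'⟩ := hbox
  exact ⟨⟨by simp only [Prod.map_fst]; positivity, (inv_mul_lt_iff₀ ha).mpr hq1'⟩,
    by simp only [Prod.map_snd]; positivity, (inv_mul_lt_iff₀ hb).mpr hq2'⟩

lemma emptyBoxAbscissas_nonempty (hfin : ∀ K, IsCompact K → (Λ ∩ K).Finite) {p : ℝ × ℝ}
    (hp : p ∈ Λ) (hp1 : 0 < p.1) (hp2 : 0 < p.2) : (emptyBoxAbscissas Λ).Nonempty := by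
  -- a lowest point of `Λ` in `(0, p.1] × (0, p.2]` is the corner of an empty box
  have hF : (Λ ∩ Ioc 0 p.1 ×ˢ Ioc 0 p.2).Finite :=
    (hfin _ (isCompact_Icc.prod isCompact_Icc)).subset
      (inter_subset_inter_right _ (prod_mono Ioc_subset_Icc_self Ioc_subset_Icc_self))
  obtain ⟨q, ⟨hq, ⟨hq1, hq1'⟩, hq2, hq2'⟩, hmin⟩ :=
    exists_min_image _ Prod.snd hF ⟨p, hp, ⟨hp1, le_rfl⟩, hp2, le_rfl⟩
  refine ⟨q.1, q.2, hq, hq1, hq2, fun r hr ⟨⟨hr1, hr1'⟩, hr2, hr2'⟩ => ?_⟩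
  have := hmin r ⟨hr, ⟨hr1, by linarith⟩, hr2, by linarith⟩
  linarith

lemma exists_mem_fst_lt (ha0 : 0 < a) (ha1 : a < 1) (hb : 0 < b)
    (hab : MapsTo (Prod.map (a * ·) (b * ·)) Λ Λ) {p : ℝ × ℝ} (hp : p ∈ Λ) (hp1 : 0 < p.1)
    (hp2 : 0 < p.2) {ε : ℝ} (hε : 0 < ε) : ∃ q ∈ Λ, 0 < q.1 ∧ q.1 < ε ∧ 0 < q.2 := by
  obtain ⟨k, hk⟩ := exists_pow_lt_of_lt_one (div_pos hε hp1) ha1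
  refine ⟨(Prod.map (a * ·) (b * ·))^[k] p, hab.iterate k hp, ?_⟩
  simp only [Prod.map_iterate, mul_left_iterate, Prod.map_fst, Prod.map_snd]
  exact ⟨by positivity, (lt_div_iff₀ hp1).mp hk, by positivity⟩

lemma finite_emptyBoxAbscissas_inter_Icc (hfin : ∀ K, IsCompact K → (Λ ∩ K).Finite)
    (hsmall : ∀ ε > 0, ∃ q ∈ Λ, 0 < q.1 ∧ q.1 < ε ∧ 0 < q.2) {a : ℝ} (ha : 0 < a) (b : ℝ) :
    (emptyBoxAbscissas Λ ∩ Icc a b).Finite := by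
  obtain ⟨q, hq, hq1, hqa, hq2⟩ := hsmall a ha
  refine ((hfin _ (isCompact_Icc.prod isCompact_Icc :
    IsCompact (Icc a b ×ˢ Icc 0 q.2))).image Prod.fst).subset ?_
  rintro x ⟨⟨s, hxs, hx, hs, hempty⟩, hax, hxb⟩
  refine ⟨(x, s), ⟨hxs, ⟨hax, hxb⟩, hs.le, ?_⟩, rfl⟩
  by_contra! hsq
  exact hempty q hq ⟨⟨hq1, hqa.trans_le hax⟩, hq2, hsq⟩

lemma isScaleInvariantDiscrete_emptyBoxAbscissas (ha0 : 0 < a) (ha1 : a < 1) (hb : 0 < b)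
    (hfin : ∀ K, IsCompact K → (Λ ∩ K).Finite)
    (hab : MapsTo (Prod.map (a * ·) (b * ·)) Λ Λ)
    (hab' : MapsTo (Prod.map (a⁻¹ * ·) (b⁻¹ * ·)) Λ Λ) {p : ℝ × ℝ} (hp : p ∈ Λ)
    (hp1 : 0 < p.1) (hp2 : 0 < p.2) : IsScaleInvariantDiscrete a (emptyBoxAbscissas Λ) where
  nonempty := emptyBoxAbscissas_nonempty hfin hp hp1 hp2
  pos _ := fun ⟨_, _, hx, _⟩ => hx
  finite_inter_Icc _ b' ha' := finite_emptyBoxAbscissas_inter_Icc hfin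
    (fun _ hε => exists_mem_fst_lt ha0 ha1 hb hab hp hp1 hp2 hε) ha' b'
  mul_mem _ hx := mul_mem_emptyBoxAbscissas ha0 hb hab hab' hx
  inv_mul_mem _ hx := mul_mem_emptyBoxAbscissas (inv_pos.mpr ha0) (inv_pos.mpr hb) hab'
    (by simpa only [inv_inv] using hab) hx

end EmptyBoxes

section LatticeCoordinates

variable {α β : ℝ}

lemma intCast_eq_tcoord_add_scoord (h : α ≠ β) (m n : ℤ) :
    (m : ℝ) = tcoord α β m n + scoord α β m n := by
  have := sub_ne_zero.mpr h
  rw [tcoord, scoord]; field_simp; ring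

lemma intCast_eq_tcoord_mul_add_scoord_mul (h : α ≠ β) (m n : ℤ) :
    (n : ℝ) = tcoord α β m n * α + scoord α β m n * β := by
  have := sub_ne_zero.mpr h
  rw [tcoord, scoord]; field_simp; ring

lemma tcoord_eq_and_scoord_eq (h : α ≠ β) {m n : ℤ} {a b : ℝ} (hm : (m : ℝ) = a + b)
    (hn : (n : ℝ) = a * α + b * β) : tcoord α β m n = a ∧ scoord α β m n = b := by
  have := sub_ne_zero.mpr h
  rw [tcoord, scoord, hm, hn]
  constructor <;> (field_simp; ring)

lemma finite_setOf_intCast_mem {K : Set (ℝ × ℝ)} (hK : IsCompact K) :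
    {p : ℤ × ℤ | ((p.1 : ℝ), (p.2 : ℝ)) ∈ K}.Finite := by
  have h : Tendsto (Prod.map ((↑) : ℤ → ℝ) ((↑) : ℤ → ℝ)) cofinite (cocompact (ℝ × ℝ)) := by
    rw [← coprod_cofinite, ← coprod_cocompact]
    exact Int.tendsto_coe_cofinite.prodMap_coprod Int.tendsto_coe_cofinite
  have := mem_cofinite.mp (h hK.compl_mem_cocompact)
  rwa [preimage_compl, compl_compl] at this

def latticeCoords (α β σ : ℝ) : Set (ℝ × ℝ) :=
  range fun p : ℤ × ℤ => (tcoord α β p.1 p.2, σ * scoord α β p.1 p.2)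

lemma finite_latticeCoords_inter (h : α ≠ β) {σ : ℝ} (hσ : σ ≠ 0) {K : Set (ℝ × ℝ)}
    (hK : IsCompact K) : (latticeCoords α β σ ∩ K).Finite := by
  let g : ℝ × ℝ → ℝ × ℝ := fun q => (q.1 + σ⁻¹ * q.2, q.1 * α + σ⁻¹ * q.2 * β)
  have hg : IsCompact (g '' K) := hK.image (by fun_prop)
  refine ((finite_setOf_intCast_mem hg).image
    fun p : ℤ × ℤ => (tcoord α β p.1 p.2, σ * scoord α β p.1 p.2)).subset ?_
  rintro _ ⟨⟨⟨m, n⟩, rfl⟩, hK⟩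
  refine ⟨(m, n), ⟨_, hK, ?_⟩, rfl⟩
  simp only [g, inv_mul_cancel_left₀ hσ]
  rw [← intCast_eq_tcoord_add_scoord h, ← intCast_eq_tcoord_mul_add_scoord_mul h]

lemma mapsTo_latticeCoords (h : α ≠ β) (σ : ℝ) {a b c d : ℤ} {ν ξ : ℝ}
    (h1 : (a : ℝ) + b * α = ν) (h2 : (c : ℝ) + d * α = ν * α)
    (h3 : (a : ℝ) + b * β = ξ) (h4 : (c : ℝ) + d * β = ξ * β) :
    MapsTo (Prod.map (ν * ·) (ξ * ·)) (latticeCoords α β σ) (latticeCoords α β σ) := by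
  rintro _ ⟨⟨m, n⟩, rfl⟩
  have hm := intCast_eq_tcoord_add_scoord h m n
  have hn := intCast_eq_tcoord_mul_add_scoord_mul h m n
  obtain ⟨ht, hs⟩ := tcoord_eq_and_scoord_eq h (m := a * m + b * n) (n := c * m + d * n)
    (a := ν * tcoord α β m n) (b := ξ * scoord α β m n)
    (by push_cast; linear_combination (a : ℝ) * hm + b * hn + tcoord α β m n * h1 +
      scoord α β m n * h3)
    (by push_cast; linear_combination (c : ℝ) * hm + d * hn + tcoord α β m n * h2 +
      scoord α β m n * h4)
  exact ⟨(a * m + b * n, c * m + d * n), by simp only [ht, hs, Prod.map]; ring_nf⟩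

lemma exists_mem_latticeCoords_one (h : β < α) :
    ∃ p ∈ latticeCoords α β 1, 0 < p.1 ∧ 0 < p.2 := by
  obtain ⟨q, hβq, hqα⟩ := exists_rat_btwn h
  have hq : (q.num : ℝ) = q * q.den := by exact_mod_cast (Rat.mul_den_eq_num q).symm
  have hden : (0 : ℝ) < q.den := by exact_mod_cast q.den_pos
  refine ⟨_, ⟨(q.den, q.num), rfl⟩, ?_, ?_⟩ <;>
    simp only [tcoord, scoord, one_mul, Int.cast_natCast, hq] <;>
    apply div_pos _ (sub_pos.mpr h) <;> nlinarith

lemma exists_mem_latticeCoords_neg_one (h : β < α) :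
    ∃ p ∈ latticeCoords α β (-1), 0 < p.1 ∧ 0 < p.2 := by
  refine ⟨_, ⟨(0, 1), rfl⟩, ?_, ?_⟩ <;> simp only [tcoord, scoord] <;> push_cast <;> ring_nf
  all_goals exact inv_pos.mpr (by linarith)

end LatticeCoordinates

section Parallelogram

variable {α β : ℝ}

noncomputable def skewCoords (h : α ≠ β) : (ℝ × ℝ) ≃ₜ (ℝ × ℝ) where
  toFun p := ((p.2 - β * p.1) / (α - β), (α * p.1 - p.2) / (α - β))
  invFun q := (q.1 + q.2, q.1 * α + q.2 * β)
  left_inv p := by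
    have := sub_ne_zero.mpr h
    ext <;> (field_simp; ring)
  right_inv q := by
    have := sub_ne_zero.mpr h
    ext <;> (field_simp; ring)
  continuous_toFun := by fun_prop
  continuous_invFun := by fun_prop

lemma interior_Rpar (h : α ≠ β) (m n : ℤ) :
    interior (Rpar α β m n) = skewCoords h ⁻¹'
      (Ioo (min 0 (tcoord α β m n)) (max 0 (tcoord α β m n)) ×ˢ
        Ioo (min 0 (scoord α β m n)) (max 0 (scoord α β m n))) := by
  have hR : Rpar α β m n = (skewCoords h).symm '' (uIcc 0 (tcoord α β m n) ×ˢ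
      uIcc 0 (scoord α β m n)) := by
    ext p
    simp only [Rpar, mem_image, mem_prod, Prod.exists]
    exact exists₂_congr fun a b => by rw [and_assoc, eq_comm]; rfl
  rw [hR, ← (skewCoords h).symm.image_interior, (skewCoords h).image_symm, interior_prod_eq,
    uIcc, uIcc, interior_Icc, interior_Icc]

lemma mem_Ioo_min_max_iff_of_mul_pos {σ x y : ℝ} (h : 0 < σ * x) :
    y ∈ Ioo (min 0 x) (max 0 x) ↔ σ * y ∈ Ioo 0 (σ * x) := by
  rcases mul_pos_iff.mp h with ⟨hσ, hx⟩ | ⟨hσ, hx⟩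
  · rw [min_eq_left hx.le, max_eq_right hx.le]
    constructor <;> rintro ⟨h1, h2⟩ <;> constructor <;> nlinarith
  · rw [min_eq_right hx.le, max_eq_left hx.le]
    constructor <;> rintro ⟨h1, h2⟩ <;> constructor <;> nlinarith

lemma noLatticeInterior_iff_s8 (h : α ≠ β) {σ : ℝ} {m n : ℤ} (ht : 0 < tcoord α β m n)
    (hs : 0 < σ * scoord α β m n) :
    NoLatticeInterior α β m n ↔
      ∀ q ∈ latticeCoords α β σ, q ∉ Ioo 0 (tcoord α β m n) ×ˢ Ioo 0 (σ * scoord α β m n) := by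
  have key : ∀ k l : ℤ, ((k : ℝ), (l : ℝ)) ∈ interior (Rpar α β m n) ↔
      (tcoord α β k l, σ * scoord α β k l) ∈
        Ioo 0 (tcoord α β m n) ×ˢ Ioo 0 (σ * scoord α β m n) := fun k l => by
    rw [interior_Rpar h, mem_preimage, mem_prod, mem_prod, min_eq_left ht.le,
      max_eq_right ht.le, ← mem_Ioo_min_max_iff_of_mul_pos hs]
    rfl
  constructor
  · rintro H _ ⟨⟨k, l⟩, rfl⟩ hq
    exact H _ ((key k l).mpr hq) ⟨k, l, rfl⟩
  · rintro H p hp ⟨k, l, rfl⟩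
    exact H _ ⟨(k, l), rfl⟩ ((key k l).mp hp)

lemma mem_emptyBoxAbscissas_latticeCoords_iff (h : α ≠ β) {σ x : ℝ} :
    x ∈ emptyBoxAbscissas (latticeCoords α β σ) ↔ ∃ m n : ℤ, x = tcoord α β m n ∧ 0 < x ∧
      0 < σ * scoord α β m n ∧ NoLatticeInterior α β m n := by
  constructor
  · rintro ⟨s, ⟨⟨m, n⟩, hmn⟩, hx, hs, hempty⟩
    obtain ⟨rfl, rfl⟩ := Prod.mk.inj hmn
    exact ⟨m, n, rfl, hx, hs, (noLatticeInterior_iff_s8 h hx hs).mpr hempty⟩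
  · rintro ⟨m, n, rfl, hx, hs, hnli⟩
    exact ⟨_, ⟨(m, n), rfl⟩, hx, hs, (noLatticeInterior_iff_s8 h hx hs).mp hnli⟩

lemma Tminus_eq (h : β < α) : Tminus α β = emptyBoxAbscissas (latticeCoords α β 1) := by
  ext x
  simp only [mem_emptyBoxAbscissas_latticeCoords_iff h.ne', Tminus, mem_ofPred_eq, one_mul,
    scoord, div_pos_iff_of_pos_right (sub_pos.mpr h), sub_pos, sub_neg]

lemma Tplus_eq (h : β < α) : Tplus α β = emptyBoxAbscissas (latticeCoords α β (-1)) := by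
  ext x
  simp only [mem_emptyBoxAbscissas_latticeCoords_iff h.ne', Tplus, mem_ofPred_eq, neg_one_mul,
    scoord, ← neg_div, neg_sub, div_pos_iff_of_pos_right (sub_pos.mpr h)]

end Parallelogram

lemma adjugate_eigenvector_of_det_eq_one {a b c d x ν : ℝ} (hdet : a * d - b * c = 1)
    (hν : ν ≠ 0) (h1 : a + b * x = ν) (h2 : c + d * x = ν * x) :
    d + -b * x = ν⁻¹ ∧ -c + a * x = ν⁻¹ * x := by
  constructor
  · exact (inv_eq_of_mul_eq_one_right (by linear_combination -d * h1 + b * h2 + hdet)).symm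
  · rw [eq_inv_mul_iff_mul_eq₀ hν]
    linear_combination -a * h2 + c * h1 + x * hdet

theorem stmt8_general (A : Matrix (Fin 2) (Fin 2) ℤ) (hdet : A.det = 1)
    (lam mu α β : ℝ)
    (hlam0 : 0 < lam) (hlam1 : lam < 1) (hmu : 1 < mu)
    (hAα0 : (A 0 0 : ℝ) + A 0 1 * α = lam)
    (hAα1 : (A 1 0 : ℝ) + A 1 1 * α = lam * α)
    (hAβ0 : (A 0 0 : ℝ) + A 0 1 * β = mu)
    (hAβ1 : (A 1 0 : ℝ) + A 1 1 * β = mu * β)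
    (hβα : β < α) :
    Nonempty (↥(Tminus α β) ≃o ℤ) ∧ Nonempty (↥(Tplus α β) ≃o ℤ) ∧
      Nonempty (↥(Tset α β) ≃o ℤ) := by
  have hne := hβα.ne'
  have hmu0 : 0 < mu := zero_lt_one.trans hmu
  have hdetR : (A 0 0 : ℝ) * A 1 1 - A 0 1 * A 1 0 = 1 := by
    rw [Matrix.det_fin_two] at hdet
    exact_mod_cast hdet
  obtain ⟨hα0, hα1⟩ := adjugate_eigenvector_of_det_eq_one hdetR hlam0.ne' hAα0 hAα1
  obtain ⟨hβ0, hβ1⟩ := adjugate_eigenvector_of_det_eq_one hdetR hmu0.ne' hAβ0 hAβ1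
  have hT : ∀ σ ≠ 0, (∃ p ∈ latticeCoords α β σ, 0 < p.1 ∧ 0 < p.2) →
      IsScaleInvariantDiscrete lam (emptyBoxAbscissas (latticeCoords α β σ)) := by
    rintro σ hσ ⟨p, hp, hp1, hp2⟩
    exact isScaleInvariantDiscrete_emptyBoxAbscissas hlam0 hlam1 hmu0
      (fun _ hK => finite_latticeCoords_inter hne hσ hK)
      (mapsTo_latticeCoords hne σ hAα0 hAα1 hAβ0 hAβ1)
      (mapsTo_latticeCoords hne σ (a := A 1 1) (b := -A 0 1) (c := -A 1 0) (d := A 0 0)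
        (by push_cast; exact hα0) (by push_cast; exact hα1) (by push_cast; exact hβ0)
        (by push_cast; exact hβ1)) hp hp1 hp2
  have hminus := hT 1 one_ne_zero (exists_mem_latticeCoords_one hβα)
  have hplus := hT (-1) (by norm_num) (exists_mem_latticeCoords_neg_one hβα)
  rw [Tset, Tminus_eq hβα, Tplus_eq hβα]
  exact ⟨hminus.nonempty_orderIso_int hlam0 hlam1, hplus.nonempty_orderIso_int hlam0 hlam1,
    (hplus.union hminus).nonempty_orderIso_int hlam0 hlam1⟩

/-- Each of the ordered sets `T⁻`, `T⁺` and `T = T⁺ ∪ T⁻`, with the order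
induced from `ℝ`, is order-isomorphic to `(ℤ, ≤)`. -/
theorem stmt8 (A : Matrix (Fin 2) (Fin 2) ℤ) (hdet : A.det = 1)
    (lam mu α β : ℝ)
    (hlam0 : 0 < lam) (hlam1 : lam < 1) (hmu : 1 < mu)
    (hAα0 : (A 0 0 : ℝ) + A 0 1 * α = lam)
    (hAα1 : (A 1 0 : ℝ) + A 1 1 * α = lam * α)
    (hAβ0 : (A 0 0 : ℝ) + A 0 1 * β = mu)
    (hAβ1 : (A 1 0 : ℝ) + A 1 1 * β = mu * β)
    (hβα : β < α) (hα : 0 < α) :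
    Nonempty (↥(Tminus α β) ≃o ℤ) ∧ Nonempty (↥(Tplus α β) ≃o ℤ) ∧
      Nonempty (↥(Tset α β) ≃o ℤ) :=
  stmt8_general A hdet lam mu α β hlam0 hlam1 hmu hAα0 hAα1 hAβ0 hAβ1 hβα
end

section
/- Let α > 0 be irrational with partial quotients (aᵢ) and convergent numerators and denominators (pₖ), (qₖ). A pair of integers (p, q) with q ≥ 1 is a good lower approximation of the second kind of α if and only if there exist an even integer k ≥ 0 and an integer r with 0 ≤ r ≤ a_{k+2} such that p = pₖ + r·p_{k+1} and q = qₖ + r·q_{k+1}. A pair of integers (p, q) with q ≥ 1 is a good upper approximation of the second kind of α if and only if there exist an odd integer k ≥ −1 and an integer r with 0 ≤ r ≤ a_{k+2} (and r ≥ 1 in the case k = −1) such that p = pₖ + r·p_{k+1} and q = qₖ + r·q_{k+1}. -/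
/-!
Write `E(p, q) = σ (q α - p)` for the error on one side of `α` (`σ = 1` below, `σ = -1` above).
Consecutive convergents `u = (p_k, q_k)`, `w = (p_{k+1}, q_{k+1})` form a basis of `ℤ²`, and
their errors alternate in sign. If `E(u) > 0 > E(w)`, a lattice point `y u + x w` with positive
error has `y ≥ 1`, and if its denominator is below that of `u + (r + 1) w` then also `x ≤ r`;
its error `y E(u) + x E(w)` then exceeds that of the semiconvergent `u + r w` unless it is that
point. So the semiconvergents are good one-sided approximations, and as their denominators run
through consecutive brackets covering all `q ≥ 1`, there are no others.
-/

/-- `a : ℕ → ℤ` is the sequence of partial quotients of the continued fraction expansion of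
`x`, given by the Gauss map. -/
def GaussCF (x : ℝ) (a : ℕ → ℤ) : Prop :=
  ∃ v : ℕ → ℝ, v 0 = x ∧ ∀ k : ℕ, a k = ⌊v k⌋ ∧ v (k + 1) = (v k - ⌊v k⌋)⁻¹

def signedErr (α σ : ℝ) (p q : ℤ) : ℝ := σ * (q * α - p)

def IsGoodSide (α σ : ℝ) (p q : ℤ) : Prop :=
  1 ≤ q ∧ 0 < signedErr α σ p q ∧
    ∀ p' q' : ℤ, (p', q') ≠ (p, q) → 1 ≤ q' → q' ≤ q → 0 < signedErr α σ p' q' →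
      signedErr α σ p q < signedErr α σ p' q'

theorem goodLower_iff_isGoodSide {α : ℝ} {p q : ℤ} :
    GoodLower α p q ↔ IsGoodSide α 1 p q := by
  have hneg (p q : ℤ) : (p : ℝ) - q * α < 0 ↔ 0 < signedErr α 1 p q := by
    rw [signedErr, one_mul, sub_neg, sub_pos]
  have habs (p q : ℤ) (h : (p : ℝ) - q * α < 0) :
      |(p : ℝ) - q * α| = signedErr α 1 p q := by
    rw [abs_of_neg h, signedErr]; ring
  constructor
  · rintro ⟨hq, hpq, hmin⟩
    refine ⟨hq, (hneg p q).1 hpq, fun p' q' hne hq' hle hpos => ?_⟩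
    have := hmin p' q' hne hq' hle ((hneg p' q').2 hpos)
    rwa [habs p q hpq, habs p' q' ((hneg p' q').2 hpos)] at this
  · rintro ⟨hq, hpq, hmin⟩
    refine ⟨hq, (hneg p q).2 hpq, fun p' q' hne hq' hle hpos => ?_⟩
    rw [habs p q ((hneg p q).2 hpq), habs p' q' hpos]
    exact hmin p' q' hne hq' hle ((hneg p' q').1 hpos)

theorem goodUpper_iff_isGoodSide {α : ℝ} {p q : ℤ} :
    GoodUpper α p q ↔ IsGoodSide α (-1) p q := by
  have herr (p q : ℤ) : signedErr α (-1) p q = (p : ℝ) - q * α := by rw [signedErr]; ring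
  have habs (p q : ℤ) (h : 0 < (p : ℝ) - q * α) :
      |(p : ℝ) - q * α| = signedErr α (-1) p q := by
    rw [abs_of_pos h, herr]
  constructor
  · rintro ⟨hq, hpq, hmin⟩
    refine ⟨hq, (herr p q).symm ▸ hpq, fun p' q' hne hq' hle hpos => ?_⟩
    rw [herr] at hpos
    have := hmin p' q' hne hq' hle hpos
    rwa [habs p q hpq, habs p' q' hpos] at this
  · rintro ⟨hq, hpq, hmin⟩
    rw [herr] at hpq
    refine ⟨hq, hpq, fun p' q' hne hq' hle hpos => ?_⟩
    rw [habs p q hpq, habs p' q' hpos]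
    exact hmin p' q' hne hq' hle ((herr p' q').symm ▸ hpos)

theorem signedErr_mul_add_mul (α σ : ℝ) (pa qa pb qb x y : ℤ) :
    signedErr α σ (y * pa + x * pb) (y * qa + x * qb) =
      y * signedErr α σ pa qa + x * signedErr α σ pb qb := by
  simp only [signedErr]; push_cast; ring

theorem signedErr_add_mul (α σ : ℝ) (pa qa pb qb r : ℤ) :
    signedErr α σ (pa + r * pb) (qa + r * qb) =
      signedErr α σ pa qa + r * signedErr α σ pb qb := by
  simp only [signedErr]; push_cast; ring

theorem exists_eq_mul_add_mul_of_isUnit_det {pa qa pb qb : ℤ} (h : IsUnit (pa * qb - pb * qa))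
    (p q : ℤ) : ∃ x y : ℤ, p = y * pa + x * pb ∧ q = y * qa + x * qb := by
  set d := pa * qb - pb * qa
  have hd : d * d = 1 := Int.isUnit_mul_self h
  refine ⟨d * (q * pa - p * qa), d * (p * qb - q * pb), ?_, ?_⟩
  · linear_combination -p * hd
  · linear_combination -q * hd

section Semiconvergent

variable {α σ : ℝ} {pa qa pb qb : ℤ}

theorem signedErr_semiconvergent_lt (hdet : IsUnit (pa * qb - pb * qa)) (hqa : 0 ≤ qa)
    (hqb : 0 ≤ qb) (hA : 0 < signedErr α σ pa qa) (hB : signedErr α σ pb qb < 0)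
    {r p q : ℤ} (hne : (p, q) ≠ (pa + r * pb, qa + r * qb)) (hq : 1 ≤ q)
    (hlt : q < qa + (r + 1) * qb) (hpos : 0 < signedErr α σ p q) :
    signedErr α σ (pa + r * pb) (qa + r * qb) < signedErr α σ p q := by
  obtain ⟨x, y, rfl, rfl⟩ := exists_eq_mul_add_mul_of_isUnit_det hdet p q
  rw [signedErr_mul_add_mul] at hpos ⊢
  rw [signedErr_add_mul]
  set A := signedErr α σ pa qa
  set B := signedErr α σ pb qb
  have hy : 1 ≤ y := by
    by_contra! hy
    have hx : x < 0 := by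
      by_contra! hx
      have : (y : ℝ) * A ≤ 0 :=
        mul_nonpos_of_nonpos_of_nonneg (by exact_mod_cast (show y ≤ 0 by omega)) hA.le
      have : 0 ≤ (x : ℝ) := by exact_mod_cast hx
      nlinarith
    nlinarith
  have hx : x ≤ r := by
    by_contra! hx
    nlinarith
  have hy' : (1 : ℝ) ≤ y := by exact_mod_cast hy
  rcases hx.lt_or_eq with hx | rfl
  · have hx' : (x : ℝ) ≤ r - 1 := by exact_mod_cast Int.le_sub_one_of_lt hx
    nlinarith
  · have hy2 : (2 : ℝ) ≤ y := by
      have : y ≠ 1 := by rintro rfl; exact hne (by simp)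
      exact_mod_cast (show 2 ≤ y by omega)
    nlinarith

theorem signedErr_semiconvergent_pos (hB : signedErr α σ pb qb < 0) {c r : ℤ}
    (hc : 0 < signedErr α σ (pa + c * pb) (qa + c * qb)) (hr : r ≤ c) :
    0 < signedErr α σ (pa + r * pb) (qa + r * qb) := by
  rw [signedErr_add_mul] at hc ⊢
  have : (r : ℝ) ≤ c := by exact_mod_cast hr
  nlinarith

theorem isGoodSide_semiconvergent (hdet : IsUnit (pa * qb - pb * qa)) (hqa : 0 ≤ qa)
    (hqb : 0 < qb) (hA : 0 < signedErr α σ pa qa) (hB : signedErr α σ pb qb < 0) {r : ℤ}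
    (hq : 1 ≤ qa + r * qb) (hpos : 0 < signedErr α σ (pa + r * pb) (qa + r * qb)) :
    IsGoodSide α σ (pa + r * pb) (qa + r * qb) :=
  ⟨hq, hpos, fun _ _ hne hq' hle hpos' =>
    signedErr_semiconvergent_lt hdet hqa hqb.le hA hB hne hq' (by linarith) hpos'⟩

theorem eq_semiconvergent_of_isGoodSide (hdet : IsUnit (pa * qb - pb * qa)) (hqa : 0 ≤ qa)
    (hqb : 0 ≤ qb) (hA : 0 < signedErr α σ pa qa) (hB : signedErr α σ pb qb < 0) {r p q : ℤ}
    (hsemi : 1 ≤ qa + r * qb) (hpos : 0 < signedErr α σ (pa + r * pb) (qa + r * qb))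
    (hlo : qa + r * qb ≤ q) (hhi : q < qa + (r + 1) * qb) (h : IsGoodSide α σ p q) :
    (p, q) = (pa + r * pb, qa + r * qb) := by
  by_contra hne
  exact lt_asymm (h.2.2 _ _ (Ne.symm hne) hsemi hlo hpos)
    (signedErr_semiconvergent_lt hdet hqa hqb hA hB hne h.1 hhi h.2.1)

end Semiconvergent

theorem exists_le_lt_succ_of_strictMono {f : ℕ → ℤ} (hf : StrictMono f) {x : ℤ}
    (hx : f 0 ≤ x) :
    ∃ n, f n ≤ x ∧ x < f (n + 1) := by
  have hgrowth (n : ℕ) : f 0 + n ≤ f n := by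
    induction n with
    | zero => simp
    | succ n ih => push_cast; linarith [hf n.lt_succ_self]
  have hex : ∃ n, x < f n :=
    ⟨(x - f 0).toNat + 1, by have := hgrowth ((x - f 0).toNat + 1); omega⟩
  obtain ⟨n, hn⟩ : ∃ n, Nat.find hex = n + 1 :=
    Nat.exists_eq_succ_of_ne_zero fun h0 => (Nat.find_spec hex).not_ge (h0 ▸ hx)
  exact ⟨n, not_lt.1 (Nat.find_min hex (by omega)), hn ▸ Nat.find_spec hex⟩

/-- The convergents `P j / Q j` of `α`, with partial quotients `c (j + 1)`, abstracted to what
the argument needs: their errors alternate in sign, starting on the `σ`-side of `α`. -/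
structure AlternatingConvergents (α σ : ℝ) (c P Q : ℕ → ℤ) : Prop where
  num_add_two : ∀ j, P (j + 2) = c (j + 1) * P (j + 1) + P j
  den_add_two : ∀ j, Q (j + 2) = c (j + 1) * Q (j + 1) + Q j
  one_le_coeff : ∀ j, 1 ≤ c (j + 1)
  isUnit_det_zero : IsUnit (P 0 * Q 1 - P 1 * Q 0)
  den_zero_nonneg : 0 ≤ Q 0
  one_le_den_one : 1 ≤ Q 1
  neg_one_pow_mul_signedErr_pos : ∀ j, 0 < (-1) ^ j * signedErr α σ (P j) (Q j)

namespace AlternatingConvergents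

variable {α σ : ℝ} {c P Q : ℕ → ℤ}

theorem isUnit_det (h : AlternatingConvergents α σ c P Q) (j : ℕ) :
    IsUnit (P j * Q (j + 1) - P (j + 1) * Q j) := by
  induction j with
  | zero => exact h.isUnit_det_zero
  | succ j ih =>
    have hdet : P (j + 1) * Q (j + 2) - P (j + 2) * Q (j + 1) =
        -(P j * Q (j + 1) - P (j + 1) * Q j) := by
      rw [h.num_add_two, h.den_add_two]; ring
    rw [hdet]
    exact ih.neg

theorem one_le_den_succ (h : AlternatingConvergents α σ c P Q) (j : ℕ) : 1 ≤ Q (j + 1) := by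
  suffices ∀ j, 0 ≤ Q j ∧ 1 ≤ Q (j + 1) from (this j).2
  intro j
  induction j with
  | zero => exact ⟨h.den_zero_nonneg, h.one_le_den_one⟩
  | succ j ih =>
    refine ⟨by linarith [ih.2], ?_⟩
    rw [h.den_add_two]
    nlinarith [h.one_le_coeff j]

theorem den_nonneg (h : AlternatingConvergents α σ c P Q) (j : ℕ) : 0 ≤ Q j := by
  cases j with
  | zero => exact h.den_zero_nonneg
  | succ j => linarith [h.one_le_den_succ j]

theorem den_lt_den_add_two (h : AlternatingConvergents α σ c P Q) (j : ℕ) :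
    Q j < Q (j + 2) := by
  rw [h.den_add_two]
  nlinarith [h.one_le_coeff j, h.one_le_den_succ j]

theorem signedErr_add_two (h : AlternatingConvergents α σ c P Q) (j : ℕ) :
    signedErr α σ (P (j + 2)) (Q (j + 2)) =
      signedErr α σ (P j + c (j + 1) * P (j + 1)) (Q j + c (j + 1) * Q (j + 1)) := by
  rw [h.num_add_two, h.den_add_two, add_comm (P j), add_comm (Q j)]

theorem signedErr_even_pos (h : AlternatingConvergents α σ c P Q) (m : ℕ) :
    0 < signedErr α σ (P (2 * m)) (Q (2 * m)) := by
  simpa [pow_mul] using h.neg_one_pow_mul_signedErr_pos (2 * m)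

theorem signedErr_odd_neg (h : AlternatingConvergents α σ c P Q) (m : ℕ) :
    signedErr α σ (P (2 * m + 1)) (Q (2 * m + 1)) < 0 := by
  simpa [pow_succ, pow_mul] using h.neg_one_pow_mul_signedErr_pos (2 * m + 1)

theorem exists_semiconvergent_den_le_lt (h : AlternatingConvergents α σ c P Q) {q₀ : ℤ}
    (hq₀ : Q 0 ≤ q₀) : ∃ m : ℕ, ∃ r : ℤ, 0 ≤ r ∧ r < c (2 * m + 1) ∧
      Q (2 * m) + r * Q (2 * m + 1) ≤ q₀ ∧ q₀ < Q (2 * m) + (r + 1) * Q (2 * m + 1) := by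
  obtain ⟨m, hlo, hhi⟩ := exists_le_lt_succ_of_strictMono
    (strictMono_nat_of_lt_succ fun m => h.den_lt_den_add_two (2 * m)) hq₀
  have hden := h.one_le_den_succ (2 * m)
  have hden2 := h.den_add_two (2 * m)
  set r := (q₀ - Q (2 * m)) / Q (2 * m + 1)
  have hr_lo : r * Q (2 * m + 1) ≤ q₀ - Q (2 * m) := Int.ediv_mul_le _ (by omega)
  have hr_hi : q₀ - Q (2 * m) < (r + 1) * Q (2 * m + 1) :=
    Int.lt_ediv_add_one_mul_self _ (by omega)
  refine ⟨m, r, Int.ediv_nonneg (by omega) (by omega), ?_, by linarith, by linarith⟩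
  refine lt_of_mul_lt_mul_right (a := Q (2 * m + 1)) ?_ (by omega)
  rw [show 2 * (m + 1) = 2 * m + 2 by ring] at hhi
  linarith

theorem one_le_semiconvergent_den (h : AlternatingConvergents α σ c P Q) {m : ℕ} {r q₀ : ℤ}
    (hr : 0 ≤ r) (hq₀ : 1 ≤ q₀) (hlt : q₀ < Q (2 * m) + (r + 1) * Q (2 * m + 1)) :
    1 ≤ Q (2 * m) + r * Q (2 * m + 1) := by
  have hrQ := mul_nonneg hr (h.den_nonneg (2 * m + 1))
  cases m with
  | succ m =>
    have := h.one_le_den_succ (2 * m + 1)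
    rw [show 2 * m + 1 + 1 = 2 * (m + 1) by ring] at this
    linarith
  | zero =>
    rcases (h.den_nonneg 0).lt_or_eq with hQ0 | hQ0
    · linarith
    · -- a zero denominator forces `Q 1 = 1` by unimodularity
      have hunit : IsUnit (Q 1) := by
        have := h.isUnit_det_zero
        rw [← hQ0, mul_zero, sub_zero] at this
        exact isUnit_of_mul_isUnit_right this
      have hQ1 : Q 1 = 1 := by
        have := h.one_le_den_one
        rcases Int.isUnit_iff.1 hunit with h1 | h1 <;> omega
      simp only [Nat.mul_zero, zero_add, ← hQ0, hQ1] at hlt ⊢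
      linarith

theorem isGoodSide_iff (h : AlternatingConvergents α σ c P Q) {p₀ q₀ : ℤ} (hq₀ : 1 ≤ q₀)
    (hQq₀ : Q 0 ≤ q₀) :
    IsGoodSide α σ p₀ q₀ ↔ ∃ m : ℕ, ∃ r : ℤ, 0 ≤ r ∧ r ≤ c (2 * m + 1) ∧
      p₀ = P (2 * m) + r * P (2 * m + 1) ∧ q₀ = Q (2 * m) + r * Q (2 * m + 1) := by
  have hpos {m : ℕ} {r : ℤ} (hr : r ≤ c (2 * m + 1)) :
      0 < signedErr α σ (P (2 * m) + r * P (2 * m + 1)) (Q (2 * m) + r * Q (2 * m + 1)) := by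
    refine signedErr_semiconvergent_pos (h.signedErr_odd_neg m) ?_ hr
    rw [← h.signedErr_add_two, show 2 * m + 2 = 2 * (m + 1) by ring]
    exact h.signedErr_even_pos (m + 1)
  constructor
  · intro hgood
    obtain ⟨m, r, hr0, hrc, hlo, hhi⟩ := h.exists_semiconvergent_den_le_lt (by omega)
    have := eq_semiconvergent_of_isGoodSide (h.isUnit_det (2 * m)) (h.den_nonneg _)
      (h.den_nonneg _) (h.signedErr_even_pos m) (h.signedErr_odd_neg m)
      (h.one_le_semiconvergent_den hr0 hq₀ hhi) (hpos hrc.le) hlo hhi hgood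
    exact ⟨m, r, hr0, hrc.le, Prod.ext_iff.1 this⟩
  · rintro ⟨m, r, -, hrc, rfl, rfl⟩
    exact isGoodSide_semiconvergent (h.isUnit_det (2 * m)) (h.den_nonneg _)
      (h.one_le_den_succ _) (h.signedErr_even_pos m) (h.signedErr_odd_neg m) hq₀ (hpos hrc)

end AlternatingConvergents

section GaussMap

variable {v : ℕ → ℝ}

theorem irrational_of_gauss (hv : ∀ k, v (k + 1) = (Int.fract (v k))⁻¹) (h0 : Irrational (v 0))
    (k : ℕ) : Irrational (v k) := by
  induction k with
  | zero => exact h0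
  | succ k ih => rw [hv, Int.fract]; exact (ih.sub_intCast _).inv

theorem fract_pos_of_gauss (hv : ∀ k, v (k + 1) = (Int.fract (v k))⁻¹) (h0 : Irrational (v 0))
    (k : ℕ) : 0 < Int.fract (v k) :=
  Int.fract_pos.2 ((irrational_of_gauss hv h0 k).ne_int _)

theorem one_le_floor_succ_of_gauss (hv : ∀ k, v (k + 1) = (Int.fract (v k))⁻¹)
    (h0 : Irrational (v 0)) (k : ℕ) : 1 ≤ ⌊v (k + 1)⌋ := by
  rw [Int.le_floor, hv, Int.cast_one]
  exact (one_le_inv₀ (fract_pos_of_gauss hv h0 k)).2 (Int.fract_lt_one _).le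

theorem fract_mul_fract_succ_of_gauss (hv : ∀ k, v (k + 1) = (Int.fract (v k))⁻¹)
    (h0 : Irrational (v 0)) (k : ℕ) :
    Int.fract (v k) * Int.fract (v (k + 1)) = 1 - ⌊v (k + 1)⌋ * Int.fract (v k) := by
  have hinv : Int.fract (v k) * v (k + 1) = 1 := by
    rw [hv]; exact mul_inv_cancel₀ (fract_pos_of_gauss hv h0 k).ne'
  rw [← Int.self_sub_floor (v (k + 1))]
  linear_combination hinv

end GaussMap

/-- `seqCons 1 p` and `seqCons 0 q` are the convergents indexed from `-1`, with `p₋₁ = 1` and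
`q₋₁ = 0`. -/
def seqCons (x : ℤ) (f : ℕ → ℤ) : ℕ → ℤ
  | 0 => x
  | n + 1 => f n

namespace GaussCF

variable {α : ℝ} {a p q : ℕ → ℤ}

theorem one_le_succ (hcf : GaussCF α a) (hirr : Irrational α) (k : ℕ) : 1 ≤ a (k + 1) := by
  obtain ⟨v, rfl, hv⟩ := hcf
  rw [(hv (k + 1)).1]
  exact one_le_floor_succ_of_gauss (fun k => (hv k).2) hirr k

/-- Each error `q k α - p k` is `-Int.fract (v (k + 1))` times the previous one, `v` being the
complete quotients. -/
theorem neg_one_pow_mul_sub_pos (hcf : GaussCF α a) (hirr : Irrational α)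
    (hp0 : p 0 = a 0) (hq0 : q 0 = 1) (hp1 : p 1 = a 1 * a 0 + 1) (hq1 : q 1 = a 1)
    (hp : ∀ k : ℕ, p (k + 2) = a (k + 2) * p (k + 1) + p k)
    (hq : ∀ k : ℕ, q (k + 2) = a (k + 2) * q (k + 1) + q k) (k : ℕ) :
    0 < (-1) ^ k * ((q k : ℝ) * α - p k) := by
  obtain ⟨v, rfl, hv⟩ := hcf
  have hgauss : ∀ k, v (k + 1) = (Int.fract (v k))⁻¹ := fun k => (hv k).2
  have ha (k : ℕ) : (a k : ℝ) = v k - Int.fract (v k) := by rw [(hv k).1, Int.self_sub_fract]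
  have hrel (k : ℕ) :
      Int.fract (v k) * Int.fract (v (k + 1)) = 1 - a (k + 1) * Int.fract (v k) := by
    rw [(hv (k + 1)).1]; exact fract_mul_fract_succ_of_gauss hgauss hirr k
  have hstep (k : ℕ) : (q (k + 1) : ℝ) * v 0 - p (k + 1) =
      -Int.fract (v (k + 1)) * ((q k : ℝ) * v 0 - p k) := by
    induction k with
    | zero =>
      rw [hp0, hq0, hp1, hq1]
      push_cast
      linear_combination hrel 0 - (a 1 + Int.fract (v 1)) * ha 0
    | succ k ih =>
      rw [hp, hq]
      push_cast
      linear_combination (a (k + 2) + Int.fract (v (k + 2))) * ih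
        - ((q k : ℝ) * v 0 - p k) * hrel (k + 1)
  induction k with
  | zero => simpa [hp0, hq0, ha 0] using fract_pos_of_gauss hgauss hirr 0
  | succ k ih =>
    rw [hstep, pow_succ]
    nlinarith [fract_pos_of_gauss hgauss hirr (k + 1)]

theorem alternatingConvergents_lower (hcf : GaussCF α a) (hirr : Irrational α)
    (hp0 : p 0 = a 0) (hq0 : q 0 = 1) (hp1 : p 1 = a 1 * a 0 + 1) (hq1 : q 1 = a 1)
    (hp : ∀ k : ℕ, p (k + 2) = a (k + 2) * p (k + 1) + p k)
    (hq : ∀ k : ℕ, q (k + 2) = a (k + 2) * q (k + 1) + q k) :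
    AlternatingConvergents α 1 (fun j => a (j + 1)) p q where
  num_add_two := hp
  den_add_two := hq
  one_le_coeff j := hcf.one_le_succ hirr (j + 1)
  isUnit_det_zero := by
    rw [hp0, hq0, hp1, hq1, show a 0 * a 1 - (a 1 * a 0 + 1) * 1 = -1 by ring]
    exact isUnit_one.neg
  den_zero_nonneg := by rw [hq0]; exact zero_le_one
  one_le_den_one := hq1 ▸ hcf.one_le_succ hirr 0
  neg_one_pow_mul_signedErr_pos k := by
    simpa only [signedErr, one_mul] using hcf.neg_one_pow_mul_sub_pos hirr hp0 hq0 hp1 hq1 hp hq k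

theorem alternatingConvergents_upper (hcf : GaussCF α a) (hirr : Irrational α)
    (hp0 : p 0 = a 0) (hq0 : q 0 = 1) (hp1 : p 1 = a 1 * a 0 + 1) (hq1 : q 1 = a 1)
    (hp : ∀ k : ℕ, p (k + 2) = a (k + 2) * p (k + 1) + p k)
    (hq : ∀ k : ℕ, q (k + 2) = a (k + 2) * q (k + 1) + q k) :
    AlternatingConvergents α (-1) a (seqCons 1 p) (seqCons 0 q) where
  num_add_two
    | 0 => by simp only [seqCons, hp1, hp0]
    | j + 1 => hp j
  den_add_two
    | 0 => by simp only [seqCons, hq1, hq0]; ring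
    | j + 1 => hq j
  one_le_coeff := hcf.one_le_succ hirr
  isUnit_det_zero := by simp [seqCons, hq0]
  den_zero_nonneg := le_rfl
  one_le_den_one := hq0.ge
  neg_one_pow_mul_signedErr_pos
    | 0 => by norm_num [seqCons, signedErr]
    | k + 1 => by
      have := hcf.neg_one_pow_mul_sub_pos hirr hp0 hq0 hp1 hq1 hp hq k
      simp only [seqCons, signedErr, pow_succ]
      linarith

end GaussCF

theorem stmt10_general (α : ℝ) (hirr : Irrational α)
    (a p q : ℕ → ℤ) (hcf : GaussCF α a)
    (hp0 : p 0 = a 0) (hq0 : q 0 = 1)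
    (hp1 : p 1 = a 1 * a 0 + 1) (hq1 : q 1 = a 1)
    (hp : ∀ k : ℕ, p (k + 2) = a (k + 2) * p (k + 1) + p k)
    (hq : ∀ k : ℕ, q (k + 2) = a (k + 2) * q (k + 1) + q k) :
    (∀ P Q : ℤ, 1 ≤ Q →
      (GoodLower α P Q ↔ ∃ k : ℕ, Even k ∧ ∃ r : ℤ, 0 ≤ r ∧ r ≤ a (k + 2) ∧
        P = p k + r * p (k + 1) ∧ Q = q k + r * q (k + 1))) ∧
    (∀ P Q : ℤ, 1 ≤ Q →
      (GoodUpper α P Q ↔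
        ((∃ r : ℤ, 1 ≤ r ∧ r ≤ a 1 ∧ P = 1 + r * p 0 ∧ Q = r * q 0) ∨
         (∃ k : ℕ, Odd k ∧ ∃ r : ℤ, 0 ≤ r ∧ r ≤ a (k + 2) ∧
            P = p k + r * p (k + 1) ∧ Q = q k + r * q (k + 1))))) := by
  have hlow := hcf.alternatingConvergents_lower hirr hp0 hq0 hp1 hq1 hp hq
  have hup := hcf.alternatingConvergents_upper hirr hp0 hq0 hp1 hq1 hp hq
  refine ⟨fun P Q hQ => ?_, fun P Q hQ => ?_⟩
  · rw [goodLower_iff_isGoodSide, hlow.isGoodSide_iff hQ (hq0 ▸ hQ)]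
    constructor
    · rintro ⟨m, h⟩
      exact ⟨2 * m, even_two_mul m, h⟩
    · rintro ⟨k, ⟨m, rfl⟩, h⟩
      exact ⟨m, by rwa [← two_mul] at h⟩
  · rw [goodUpper_iff_isGoodSide, hup.isGoodSide_iff hQ (by simp only [seqCons]; omega)]
    constructor
    · rintro ⟨_ | m, r, hr0, hra, rfl, rfl⟩
      · refine Or.inl ⟨r, ?_, hra, rfl, by simp [seqCons]⟩
        simp only [seqCons, hq0] at hQ
        omega
      · exact Or.inr ⟨2 * m + 1, odd_two_mul_add_one m, r, hr0, hra, rfl, rfl⟩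
    · rintro (⟨r, hr1, hra, rfl, rfl⟩ | ⟨k, ⟨m, rfl⟩, r, hr0, hra, rfl, rfl⟩)
      · exact ⟨0, r, by omega, hra, rfl, by simp [seqCons]⟩
      · exact ⟨m + 1, r, hr0, hra, rfl, rfl⟩

/-- Let `α > 0` be irrational with partial quotients `aᵢ` and convergents
`pₖ/qₖ`. A pair `(p,q)` with `q ≥ 1` is a good lower approximation of the second kind of `α`
iff `(p,q) = (pₖ + r p_{k+1}, qₖ + r q_{k+1})` for some even `k ≥ 0` and `0 ≤ r ≤ a_{k+2}`;
and a good upper approximation of the second kind of `α` iff the same holds for some odd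
`k ≥ −1` and `0 ≤ r ≤ a_{k+2}` (with `r ≥ 1` when `k = −1`, in which case
`(p,q) = (1 + r p₀, r q₀)` since `p₋₁ = 1`, `q₋₁ = 0`). -/
theorem stmt10 (α : ℝ) (hirr : Irrational α) (hα : 0 < α)
    (a p q : ℕ → ℤ) (hcf : GaussCF α a)
    (hp0 : p 0 = a 0) (hq0 : q 0 = 1)
    (hp1 : p 1 = a 1 * a 0 + 1) (hq1 : q 1 = a 1)
    (hp : ∀ k : ℕ, p (k + 2) = a (k + 2) * p (k + 1) + p k)
    (hq : ∀ k : ℕ, q (k + 2) = a (k + 2) * q (k + 1) + q k) :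
    (∀ P Q : ℤ, 1 ≤ Q →
      (GoodLower α P Q ↔ ∃ k : ℕ, Even k ∧ ∃ r : ℤ, 0 ≤ r ∧ r ≤ a (k + 2) ∧
        P = p k + r * p (k + 1) ∧ Q = q k + r * q (k + 1))) ∧
    (∀ P Q : ℤ, 1 ≤ Q →
      (GoodUpper α P Q ↔
        ((∃ r : ℤ, 1 ≤ r ∧ r ≤ a 1 ∧ P = 1 + r * p 0 ∧ Q = r * q 0) ∨
         (∃ k : ℕ, Odd k ∧ ∃ r : ℤ, 0 ≤ r ∧ r ≤ a (k + 2) ∧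
            P = p k + r * p (k + 1) ∧ Q = q k + r * q (k + 1))))) :=
  stmt10_general α hirr a p q hcf hp0 hq0 hp1 hq1 hp hq
end
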